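/- arXiv:1008.4535 — 7 statements merged into one kernel-verified Lean document; each statement's English description precedes it below -/
import Mathlib

section
/- Let Φ be an n × N complex matrix whose columns u_1, ..., u_N are unit vectors with coherence μ = max_{r≠s} |⟨u_r, u_s⟩|. Then for every k-sparse vector x ∈ ℂ^N (a vector with at most k nonzero coordinates), one has |‖Φx‖₂² − ‖x‖₂²| ≤ (k−1)·μ·‖x‖₂². In particular Φ satisfies the Restricted Isometry Property of order k with constant δ = (k−1)μ. -/
/-!
Writing `‖Φx‖² = x* (Φ*Φ) x`, the Gram matrix `Φ*Φ` has unit diagonal, so `‖Φx‖² - ‖x‖²` is the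
off-diagonal part of the quadratic form. Its entries have modulus at most `μ`, so it is bounded by
`μ ∑_{r ≠ s} |x_r| |x_s| = μ ((∑ |x_r|)² - ∑ |x_r|²)`, and Cauchy–Schwarz on the support of `x`,
which has at most `k` elements, gives `(∑ |x_r|)² ≤ k ∑ |x_r|²`.
-/

open Finset Matrix

theorem Finset.sum_product_self_eq_sum_diag_add_sum_offDiag {ι R : Type*} [DecidableEq ι]
    [AddCommMonoid R] (s : Finset ι) (f : ι → ι → R) :
    ∑ i ∈ s, ∑ j ∈ s, f i j = ∑ i ∈ s, f i i + ∑ p ∈ s.offDiag, f p.1 p.2 := by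
  rw [← sum_product' s s f, ← diag_union_offDiag, sum_union (disjoint_diag_offDiag s), sum_diag]

theorem Finset.sum_offDiag_mul_le_card_pred_mul_sum_sq {ι : Type*} [Fintype ι] [DecidableEq ι]
    (a : ι → ℝ) {k : ℕ} (hk : #{i | a i ≠ 0} ≤ k) :
    ∑ p ∈ univ.offDiag, a p.1 * a p.2 ≤ (k - 1) * ∑ i, a i ^ 2 := by
  set S : Finset ι := {i | a i ≠ 0}
  have hsupp : ∀ {f : ι → ℝ}, (∀ i, a i = 0 → f i = 0) → ∑ i ∈ S, f i = ∑ i, f i := fun hf =>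
    sum_subset (subset_univ S) fun i _ hi => hf i (by simpa [S] using hi)
  have hsq : (∑ i, a i) ^ 2 = ∑ i, a i ^ 2 + ∑ p ∈ univ.offDiag, a p.1 * a p.2 := by
    rw [sq, sum_mul_sum, sum_product_self_eq_sum_diag_add_sum_offDiag]
    simp only [sq]
  have hCS : (∑ i, a i) ^ 2 ≤ #S * ∑ i, a i ^ 2 := by
    rw [← hsupp (fun i hi => hi), ← hsupp (fun i hi => by simp [hi])]
    exact sq_sum_le_card_mul_sum_sq
  have hkS : (#S : ℝ) ≤ k := by exact_mod_cast hk
  nlinarith [mul_le_mul_of_nonneg_right hkS (sum_nonneg fun i (_ : i ∈ univ) => sq_nonneg (a i))]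

section RCLike

variable {𝕜 m ι : Type*} [RCLike 𝕜] [Fintype m]

theorem Matrix.star_dotProduct_self_eq_ofReal_sum_norm_sq (v : m → 𝕜) :
    star v ⬝ᵥ v = ((∑ i, ‖v i‖ ^ 2 : ℝ) : 𝕜) := by
  simp [dotProduct, RCLike.conj_mul]

theorem Matrix.conjTranspose_mul_self_apply_self (A : Matrix m ι 𝕜) (j : ι) :
    (Aᴴ * A) j j = ((∑ i, ‖A i j‖ ^ 2 : ℝ) : 𝕜) := by
  rw [← star_dotProduct_self_eq_ofReal_sum_norm_sq]
  rfl

variable [Fintype ι]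

theorem Matrix.star_mulVec_dotProduct_mulVec (A : Matrix m ι 𝕜) (x : ι → 𝕜) :
    star (A *ᵥ x) ⬝ᵥ A *ᵥ x = star x ⬝ᵥ (Aᴴ * A) *ᵥ x := by
  simp only [star_mulVec, dotProduct_mulVec, vecMul_vecMul]

variable [DecidableEq ι]

theorem Matrix.star_dotProduct_mulVec_eq_add_sum_offDiag (M : Matrix ι ι 𝕜)
    (hdiag : ∀ i, M i i = 1) (x : ι → 𝕜) :
    star x ⬝ᵥ M *ᵥ x =
      star x ⬝ᵥ x + ∑ p ∈ univ.offDiag, star (x p.1) * M p.1 p.2 * x p.2 := by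
  simp only [dotProduct, mulVec, mul_sum, ← mul_assoc]
  rw [sum_product_self_eq_sum_diag_add_sum_offDiag]
  simp [hdiag]

theorem Matrix.norm_star_dotProduct_mulVec_sub_le (M : Matrix ι ι 𝕜) (hdiag : ∀ i, M i i = 1)
    {μ : ℝ} (hoff : ∀ i j, i ≠ j → ‖M i j‖ ≤ μ) (x : ι → 𝕜) :
    ‖star x ⬝ᵥ M *ᵥ x - star x ⬝ᵥ x‖ ≤ μ * ∑ p ∈ univ.offDiag, ‖x p.1‖ * ‖x p.2‖ := by
  rw [star_dotProduct_mulVec_eq_add_sum_offDiag M hdiag, add_sub_cancel_left, mul_sum]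
  refine (norm_sum_le _ _).trans (sum_le_sum fun p hp => ?_)
  rw [norm_mul, norm_mul, norm_star]
  have := hoff p.1 p.2 (mem_offDiag.mp hp).2.2
  nlinarith [mul_nonneg (norm_nonneg (x p.1)) (norm_nonneg (x p.2))]

end RCLike

open Finset in
theorem stmt0 (n N k : ℕ) (Φ : Matrix (Fin n) (Fin N) ℂ) (μ : ℝ)
    (hunit : ∀ j : Fin N, ∑ i : Fin n, ‖Φ i j‖ ^ 2 = 1)
    (hcoh : ∀ r s : Fin N, r ≠ s →
      ‖∑ i : Fin n, Φ i r * (starRingEnd ℂ) (Φ i s)‖ ≤ μ)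
    (hμ : 0 ≤ μ)
    (x : Fin N → ℂ)
    (hsparse : (Finset.univ.filter (fun j => x j ≠ 0)).card ≤ k) :
    |(∑ i : Fin n, ‖Φ.mulVec x i‖ ^ 2) - ∑ j : Fin N, ‖x j‖ ^ 2| ≤
      ((k : ℝ) - 1) * μ * ∑ j : Fin N, ‖x j‖ ^ 2 := by
  have hdiag : ∀ j, (Φᴴ * Φ) j j = 1 := fun j => by
    rw [conjTranspose_mul_self_apply_self, hunit, RCLike.ofReal_one]
  have hoff : ∀ r s, r ≠ s → ‖(Φᴴ * Φ) r s‖ ≤ μ := fun r s hrs => by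
    simpa [mul_apply, mul_comm] using hcoh s r hrs.symm
  have hquad := norm_star_dotProduct_mulVec_sub_le (Φᴴ * Φ) hdiag hoff x
  rw [← star_mulVec_dotProduct_mulVec, star_dotProduct_self_eq_ofReal_sum_norm_sq,
    star_dotProduct_self_eq_ofReal_sum_norm_sq, ← RCLike.ofReal_sub, RCLike.norm_ofReal] at hquad
  calc _ ≤ μ * ∑ p ∈ univ.offDiag, ‖x p.1‖ * ‖x p.2‖ := hquad
    _ ≤ μ * ((k - 1) * ∑ j, ‖x j‖ ^ 2) := by
      gcongr
      exact sum_offDiag_mul_le_card_pred_mul_sum_sq (fun j => ‖x j‖) (by simpa using hsparse)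
    _ = _ := by ring
end

section
/- Suppose the columns u_1, ..., u_N of an n × N matrix Φ are unit vectors and Φ satisfies the flat RIP of order k with constant δ: for any disjoint J₁, J₂ ⊆ {1,...,N} with |J₁| ≤ k, |J₂| ≤ k, |⟨∑_{j∈J₁} u_j, ∑_{j∈J₂} u_j⟩| ≤ δ(|J₁||J₂|)^{1/2}. Then for any disjoint J₁, J₂ with |J₁| ≤ k, |J₂| ≤ k and any real coefficients 0 ≤ x_j, y_j ≤ 1, one has |⟨∑_{j∈J₁} x_j u_j, ∑_{j∈J₂} y_j u_j⟩| ≤ δ(|J₁||J₂|)^{1/2}. -/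
open Finset

private lemma box_aux {ι : Type*} [DecidableEq ι] (J : Finset ι) (v : ι → ℂ) (C : ℝ) :
    ∀ (w : ℂ), (∀ z : ι → ℝ, (∀ j ∈ J, z j = 0 ∨ z j = 1) →
      ‖w + ∑ j ∈ J, (z j : ℂ) * v j‖ ≤ C) →
    ∀ x : ι → ℝ, (∀ j, 0 ≤ x j) → (∀ j, x j ≤ 1) →
      ‖w + ∑ j ∈ J, (x j : ℂ) * v j‖ ≤ C := by
  classical
  induction J using Finset.induction with
  | empty => intro w h01 x _ _; simpa using h01 0 (by simp)
  | @insert a J ha ih =>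
    intro w h01 x hx0 hx1
    have key : ∀ c : ℝ, (c = 0 ∨ c = 1) →
        ‖(w + (c : ℂ) * v a) + ∑ j ∈ J, (x j : ℂ) * v j‖ ≤ C := by
      intro c hc
      refine ih (w + (c : ℂ) * v a) ?_ x hx0 hx1
      intro z hz
      have h := h01 (Function.update z a c) ?_
      · rw [Finset.sum_insert ha] at h
        simp only [Function.update_self] at h
        have hsum : ∑ j ∈ J, ((Function.update z a c j : ℝ) : ℂ) * v j
            = ∑ j ∈ J, (z j : ℂ) * v j := by
          refine Finset.sum_congr rfl fun j hj => ?_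
          rw [Function.update_of_ne (ne_of_mem_of_not_mem hj ha)]
        rw [hsum] at h
        calc ‖w + (c : ℂ) * v a + ∑ j ∈ J, (z j : ℂ) * v j‖
            = ‖w + ((c : ℂ) * v a + ∑ j ∈ J, (z j : ℂ) * v j)‖ := by ring_nf
          _ ≤ C := h
      · intro j hj
        rcases Finset.mem_insert.mp hj with h' | h'
        · subst h'; simpa using hc
        · rw [Function.update_of_ne (ne_of_mem_of_not_mem h' ha)]
          exact hz j h'
    rw [Finset.sum_insert ha]
    set S := ∑ j ∈ J, (x j : ℂ) * v j with hS
    have h0 := key 0 (Or.inl rfl)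
    have h1 := key 1 (Or.inr rfl)
    simp only [Complex.ofReal_zero, zero_mul, add_zero, Complex.ofReal_one, one_mul] at h0 h1
    have heq : w + ((x a : ℂ) * v a + S)
        = ((1 - x a : ℝ) : ℂ) * (w + S) + ((x a : ℝ) : ℂ) * ((w + v a) + S) := by
      push_cast; ring
    rw [heq]
    calc ‖((1 - x a : ℝ) : ℂ) * (w + S) + ((x a : ℝ) : ℂ) * ((w + v a) + S)‖
        ≤ ‖((1 - x a : ℝ) : ℂ) * (w + S)‖ + ‖((x a : ℝ) : ℂ) * ((w + v a) + S)‖ :=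
          norm_add_le _ _
      _ = (1 - x a) * ‖w + S‖ + x a * ‖(w + v a) + S‖ := by
          rw [norm_mul, norm_mul, Complex.norm_real, Complex.norm_real,
            Real.norm_eq_abs, Real.norm_eq_abs,
            abs_of_nonneg (by linarith [hx1 a] : (0:ℝ) ≤ 1 - x a), abs_of_nonneg (hx0 a)]
      _ ≤ (1 - x a) * C + x a * C := by
          have h2 := hx0 a; have h3 := hx1 a
          exact add_le_add (mul_le_mul_of_nonneg_left h0 (by linarith))
            (mul_le_mul_of_nonneg_left h1 h2)
      _ = C := by ring

open Finset in
theorem stmt3 (n N k : ℕ) (u : Fin N → Fin n → ℂ) (δ : ℝ)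
    (hunit : ∀ j : Fin N, ∑ i : Fin n, ‖u j i‖ ^ 2 = 1)
    (hflat : ∀ J₁ J₂ : Finset (Fin N), Disjoint J₁ J₂ →
      J₁.card ≤ k → J₂.card ≤ k →
      ‖∑ j₁ ∈ J₁, ∑ j₂ ∈ J₂, ∑ i : Fin n, u j₁ i * (starRingEnd ℂ) (u j₂ i)‖ ≤
        δ * Real.sqrt (J₁.card * J₂.card)) :
    ∀ J₁ J₂ : Finset (Fin N), Disjoint J₁ J₂ → J₁.card ≤ k → J₂.card ≤ k →
      ∀ x y : Fin N → ℝ, (∀ j, 0 ≤ x j) → (∀ j, x j ≤ 1) →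
        (∀ j, 0 ≤ y j) → (∀ j, y j ≤ 1) →
      ‖∑ j₁ ∈ J₁, ∑ j₂ ∈ J₂, (x j₁ : ℂ) * (y j₂ : ℂ) *
          ∑ i : Fin n, u j₁ i * (starRingEnd ℂ) (u j₂ i)‖ ≤
        δ * Real.sqrt (J₁.card * J₂.card) := by
  classical
  intro J₁ J₂ hdisj hk1 hk2 x y hx0 hx1 hy0 hy1
  set c : Fin N → Fin N → ℂ := fun j₁ j₂ => ∑ i : Fin n, u j₁ i * (starRingEnd ℂ) (u j₂ i)
    with hc
  rcases Finset.eq_empty_or_nonempty J₁ with h1 | ⟨a, ha⟩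
  · simp [h1]
  rcases Finset.eq_empty_or_nonempty J₂ with h2 | ⟨b, hb⟩
  · simp [h2]
  -- δ ≥ 0
  have hδ : 0 ≤ δ := by
    have hab : a ≠ b := fun h => (Finset.disjoint_left.mp hdisj ha) (h ▸ hb)
    have h := hflat {a} {b} (by simp [hab, hab.symm])
      (le_trans (Finset.card_le_card (Finset.singleton_subset_iff.mpr ha)) hk1)
      (le_trans (Finset.card_le_card (Finset.singleton_subset_iff.mpr hb)) hk2)
    simpa using le_trans (norm_nonneg _) h
  set C : ℝ := δ * Real.sqrt (J₁.card * J₂.card) with hC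
  -- extract indicators
  have e1 : ∀ (S : Finset (Fin N)) (z : Fin N → ℝ) (f : Fin N → ℂ),
      (∀ j ∈ S, z j = 0 ∨ z j = 1) →
      ∑ j ∈ S, (z j : ℂ) * f j = ∑ j ∈ S.filter (fun j => z j = 1), f j := by
    intro S z f hz
    rw [Finset.sum_filter]
    refine Finset.sum_congr rfl fun j hj => ?_
    rcases hz j hj with h | h <;> simp [h]
  -- key: 0/1-valued case
  have key : ∀ z z' : Fin N → ℝ, (∀ j ∈ J₁, z j = 0 ∨ z j = 1) →
      (∀ j ∈ J₂, z' j = 0 ∨ z' j = 1) →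
      ‖∑ j₁ ∈ J₁, ∑ j₂ ∈ J₂, (z j₁ : ℂ) * (z' j₂ : ℂ) * c j₁ j₂‖ ≤ C := by
    intro z z' hz hz'
    have eq1 : ∑ j₁ ∈ J₁, ∑ j₂ ∈ J₂, (z j₁ : ℂ) * (z' j₂ : ℂ) * c j₁ j₂
        = ∑ j₁ ∈ J₁.filter (fun j => z j = 1), ∑ j₂ ∈ J₂.filter (fun j => z' j = 1),
          c j₁ j₂ := by
      rw [← e1 J₁ z _ hz]
      refine Finset.sum_congr rfl fun j₁ _ => ?_
      rw [Finset.mul_sum, ← e1 J₂ z' _ hz']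
      exact Finset.sum_congr rfl fun j₂ _ => by ring
    rw [eq1]
    set F₁ := J₁.filter (fun j => z j = 1)
    set F₂ := J₂.filter (fun j => z' j = 1)
    have hF₁ : F₁ ⊆ J₁ := Finset.filter_subset _ _
    have hF₂ : F₂ ⊆ J₂ := Finset.filter_subset _ _
    have h := hflat F₁ F₂ (hdisj.mono hF₁ hF₂)
      (le_trans (Finset.card_le_card hF₁) hk1)
      (le_trans (Finset.card_le_card hF₂) hk2)
    refine le_trans h ?_
    refine mul_le_mul_of_nonneg_left (Real.sqrt_le_sqrt ?_) hδ
    have := Finset.card_le_card hF₁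
    have := Finset.card_le_card hF₂
    have h1 : (0:ℝ) ≤ (F₁.card : ℝ) := Nat.cast_nonneg _
    gcongr <;> exact_mod_cast ‹_›
  have swap : ∀ (p q : Fin N → ℝ),
      ∑ j₁ ∈ J₁, (p j₁ : ℂ) * (∑ j₂ ∈ J₂, (q j₂ : ℂ) * c j₁ j₂)
      = ∑ j₂ ∈ J₂, (q j₂ : ℂ) * (∑ j₁ ∈ J₁, (p j₁ : ℂ) * c j₁ j₂) := by
    intro p q
    simp only [Finset.mul_sum]
    rw [Finset.sum_comm]
    exact Finset.sum_congr rfl fun _ _ => Finset.sum_congr rfl fun _ _ => by ring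
  have outer : ∀ z : Fin N → ℝ, (∀ j ∈ J₁, z j = 0 ∨ z j = 1) →
      ‖(0:ℂ) + ∑ j₁ ∈ J₁, (z j₁ : ℂ) * (∑ j₂ ∈ J₂, (y j₂ : ℂ) * c j₁ j₂)‖ ≤ C := by
    intro z hz
    have inner := box_aux J₂ (fun j₂ => ∑ j₁ ∈ J₁, (z j₁ : ℂ) * c j₁ j₂) C 0
      (fun z' hz' => by
        have h := key z z' hz hz'
        calc ‖(0:ℂ) + ∑ j₂ ∈ J₂, (z' j₂ : ℂ) * ∑ j₁ ∈ J₁, (z j₁ : ℂ) * c j₁ j₂‖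
            = ‖∑ j₁ ∈ J₁, ∑ j₂ ∈ J₂, (z j₁ : ℂ) * (z' j₂ : ℂ) * c j₁ j₂‖ := by
              rw [zero_add, ← swap z z']
              congr 1
              refine Finset.sum_congr rfl fun j₁ _ => ?_
              rw [Finset.mul_sum]
              exact Finset.sum_congr rfl fun j₂ _ => by ring
          _ ≤ C := h) y hy0 hy1
    rw [zero_add, swap z y]
    simpa using inner
  have final := box_aux J₁ (fun j₁ => ∑ j₂ ∈ J₂, (y j₂ : ℂ) * c j₁ j₂) C 0 outer x hx0 hx1
  rw [zero_add] at final
  calc ‖∑ j₁ ∈ J₁, ∑ j₂ ∈ J₂, (x j₁ : ℂ) * (y j₂ : ℂ) * c j₁ j₂‖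
      = ‖∑ j₁ ∈ J₁, (x j₁ : ℂ) * (∑ j₂ ∈ J₂, (y j₂ : ℂ) * c j₁ j₂)‖ := by
        congr 1
        refine Finset.sum_congr rfl fun j₁ _ => ?_
        rw [Finset.mul_sum]
        exact Finset.sum_congr rfl fun j₂ _ => by ring
    _ ≤ C := final
end

section
/- Let k ≥ 2^{10} and let s be a positive integer. Suppose an n × N matrix Φ with unit-norm columns satisfies flat RIP of order k with constant δ, i.e., for all disjoint J₁, J₂ ⊆ {1,...,N} with |J₁| ≤ k, |J₂| ≤ k, |⟨∑_{j∈J₁} u_j, ∑_{j∈J₂} u_j⟩| ≤ δ(|J₁||J₂|)^{1/2}. Then Φ satisfies the RIP of order 2sk with constant 44·s·δ·log k. -/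
/-!
Expanding `‖Φ x‖² = ∑ |x i|² + ∑_{i ≠ j} x i * conj (x j) * ⟪u i, u j⟫` reduces the theorem to a
bound on the off-diagonal form. Flat RIP bounds it on indicator vectors of disjoint sets of size at
most `k`. A vector with entries in `[0, 1]` is an average of indicator vectors (keep each index
independently with that probability), and concavity of `√` carries the bound over to such weights.
Splitting a nonnegative vector into the `⌈log₄ k⌉ + 1` dyadic level sets of its entries, and a
complex vector into four nonnegative parts, extends it to arbitrary vectors at the price of a factor
`O(log k)`. Finally the support of `x` is cut into `2 s` blocks of size at most `k`: two distinct
blocks are disjoint, and inside one block the off-diagonal form is an average over the splits of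
the block into two disjoint halves.
-/

open Finset ComplexConjugate

section Sums

variable {ι : Type*}

theorem sum_ite_mem_of_subset {M : Type*} [DecidableEq ι] [AddCommMonoid M] {A T : Finset ι}
    (hT : T ⊆ A) (f : ι → M) : ∑ i ∈ A, (if i ∈ T then f i else 0) = ∑ i ∈ T, f i := by
  rw [sum_ite_mem, inter_eq_right.2 hT]

theorem sum_sqrt_le_sqrt_card_mul_sqrt_sum (s : Finset ι) {f : ι → ℝ}
    (hf : ∀ i ∈ s, 0 ≤ f i) : ∑ i ∈ s, √(f i) ≤ √(#s : ℝ) * √(∑ i ∈ s, f i) := by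
  have h := Real.sum_mul_le_sqrt_mul_sqrt s (fun _ => 1) (fun i => √(f i))
  simp only [one_mul, one_pow, sum_const, nsmul_eq_mul, mul_one] at h
  rwa [sum_congr rfl fun i hi => Real.sq_sqrt (hf i hi)] at h

theorem le_sqrt_sum_sq_of_mem {A : Finset ι} {u : ι → ℝ} {i : ι} (hi : i ∈ A) :
    u i ≤ √(∑ j ∈ A, u j ^ 2) :=
  Real.le_sqrt_of_sq_le (single_le_sum (f := fun j => u j ^ 2) (fun _ _ => sq_nonneg _) hi)

end Sums

section BernoulliWeight

variable {ι R M : Type*} [DecidableEq ι] [CommRing R] [AddCommGroup M] [Module R M]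

-- The probability that a random subset of `A`, containing each `i` independently with
-- probability `p i`, equals `T`.
def bernoulliWeight (p : ι → R) (A T : Finset ι) : R :=
  (∏ i ∈ T, p i) * ∏ i ∈ A \ T, (1 - p i)

theorem sum_bernoulliWeight (p : ι → R) (A : Finset ι) :
    ∑ T ∈ A.powerset, bernoulliWeight p A T = 1 := by
  simp [bernoulliWeight, ← prod_add]

theorem bernoulliWeight_nonneg {p : ι → ℝ} {A T : Finset ι} (hp : ∀ i ∈ A, p i ∈ Set.Icc 0 1)
    (hT : T ⊆ A) : 0 ≤ bernoulliWeight p A T :=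
  mul_nonneg (prod_nonneg fun i hi => (hp i (hT hi)).1)
    (prod_nonneg fun i hi => sub_nonneg.2 (hp i (mem_sdiff.1 hi).1).2)

theorem sum_bernoulliWeight_ite_mem (p : ι → R) {A : Finset ι} {i : ι} (hi : i ∈ A) :
    ∑ T ∈ A.powerset, (if i ∈ T then bernoulliWeight p A T else 0) = p i := by
  have key : ∀ T ∈ A.powerset, (if i ∈ T then bernoulliWeight p A T else 0) =
      (∏ l ∈ T, p l) * ∏ l ∈ A \ T, (if l = i then 0 else 1 - p l) := by
    intro T _
    split_ifs with hiT
    · refine congrArg _ (prod_congr rfl fun l hl => ?_)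
      rw [if_neg (ne_of_mem_of_not_mem hiT (mem_sdiff.1 hl).2).symm]
    · exact Eq.symm (mul_eq_zero_of_right _ (prod_eq_zero (mem_sdiff.2 ⟨hi, hiT⟩) (if_pos rfl)))
  rw [sum_congr rfl key, ← prod_add, ← prod_ite_eq_of_mem A i p hi]
  refine prod_congr rfl fun l _ => ?_
  by_cases hli : l = i
  · simp [hli]
  · simp [hli, Ne.symm hli]

theorem sum_bernoulliWeight_ite_mem_notMem (p : ι → R) {A : Finset ι} {i j : ι} (hi : i ∈ A)
    (hj : j ∈ A) (hij : i ≠ j) :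
    ∑ T ∈ A.powerset, (if i ∈ T ∧ j ∉ T then bernoulliWeight p A T else 0) =
      p i * (1 - p j) := by
  have key : ∀ T ∈ A.powerset, (if i ∈ T ∧ j ∉ T then bernoulliWeight p A T else 0) =
      (∏ l ∈ T, if l = j then 0 else p l) * ∏ l ∈ A \ T, (if l = i then 0 else 1 - p l) := by
    intro T _
    by_cases hiT : i ∈ T
    · by_cases hjT : j ∈ T
      · have hzero : ∏ l ∈ T, (if l = j then 0 else p l) = 0 := prod_eq_zero hjT (if_pos rfl)
        rw [if_neg (by tauto), hzero, zero_mul]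
      · rw [if_pos ⟨hiT, hjT⟩, bernoulliWeight]
        congr 1 <;> refine prod_congr rfl fun l hl => (if_neg ?_).symm
        · exact ne_of_mem_of_not_mem hl hjT
        · exact (ne_of_mem_of_not_mem hiT (mem_sdiff.1 hl).2).symm
    · rw [if_neg (by tauto)]
      exact Eq.symm (mul_eq_zero_of_right _ (prod_eq_zero (mem_sdiff.2 ⟨hi, hiT⟩) (if_pos rfl)))
  rw [sum_congr rfl key, ← prod_add, ← prod_ite_eq_of_mem A i p hi,
    ← prod_ite_eq_of_mem A j (fun l => 1 - p l) hj, ← prod_mul_distrib]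
  refine prod_congr rfl fun l _ => ?_
  by_cases hli : l = i
  · subst hli; simp [hij, Ne.symm hij]
  · by_cases hlj : l = j
    · subst hlj; simp [hli, Ne.symm hli]
    · simp [hli, hlj, Ne.symm hli, Ne.symm hlj]

theorem sum_bernoulliWeight_smul_sum (p : ι → R) (A : Finset ι) (φ : ι → M) :
    ∑ T ∈ A.powerset, bernoulliWeight p A T • ∑ i ∈ T, φ i = ∑ i ∈ A, p i • φ i := by
  calc ∑ T ∈ A.powerset, bernoulliWeight p A T • ∑ i ∈ T, φ i
      = ∑ T ∈ A.powerset, ∑ i ∈ A, (if i ∈ T then bernoulliWeight p A T else 0) • φ i := by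
        refine sum_congr rfl fun T hT => ?_
        rw [← sum_ite_mem_of_subset (mem_powerset.1 hT), smul_sum]
        simp only [ite_smul, zero_smul, smul_ite, smul_zero]
    _ = ∑ i ∈ A, p i • φ i := by
        rw [sum_comm]
        refine sum_congr rfl fun i hi => ?_
        rw [← sum_smul, sum_bernoulliWeight_ite_mem p hi]

theorem sum_bernoulliWeight_smul_sum_sum_sdiff (p : ι → R) (A : Finset ι) (h : ι → ι → M)
    (hdiag : ∀ i, h i i = 0) :
    ∑ T ∈ A.powerset, bernoulliWeight p A T • ∑ i ∈ T, ∑ j ∈ A \ T, h i j =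
      ∑ i ∈ A, ∑ j ∈ A, (p i * (1 - p j)) • h i j := by
  calc ∑ T ∈ A.powerset, bernoulliWeight p A T • ∑ i ∈ T, ∑ j ∈ A \ T, h i j
      = ∑ T ∈ A.powerset, ∑ i ∈ A, ∑ j ∈ A,
          (if i ∈ T ∧ j ∉ T then bernoulliWeight p A T else 0) • h i j := by
        refine sum_congr rfl fun T hT => ?_
        rw [← sum_ite_mem_of_subset (mem_powerset.1 hT), sdiff_eq_filter, smul_sum]
        refine sum_congr rfl fun i _ => ?_
        split_ifs with hiT <;> simp [hiT, sum_filter, smul_sum, smul_ite]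
    _ = ∑ i ∈ A, ∑ j ∈ A, (p i * (1 - p j)) • h i j := by
        rw [sum_comm]
        refine sum_congr rfl fun i hi => ?_
        rw [sum_comm]
        refine sum_congr rfl fun j hj => ?_
        rw [← sum_smul]
        rcases eq_or_ne i j with rfl | hij
        · simp [hdiag]
        · rw [sum_bernoulliWeight_ite_mem_notMem p hi hj hij]

theorem sum_bernoulliWeight_mul_sqrt_card_le {p : ι → ℝ} {A : Finset ι}
    (hp : ∀ i ∈ A, p i ∈ Set.Icc 0 1) :
    ∑ T ∈ A.powerset, bernoulliWeight p A T * √(#T : ℝ) ≤ √(∑ i ∈ A, p i) := by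
  have hcard : ∑ T ∈ A.powerset, bernoulliWeight p A T • (#T : ℝ) = ∑ i ∈ A, p i := by
    simpa using sum_bernoulliWeight_smul_sum p A (fun _ => (1 : ℝ))
  rw [← hcard]
  exact Real.strictConcaveOn_sqrt.concaveOn.le_map_sum
    (fun T hT => bernoulliWeight_nonneg hp (mem_powerset.1 hT)) (sum_bernoulliWeight p A)
    (fun T _ => Set.mem_Ici.2 (Nat.cast_nonneg _))

end BernoulliWeight

noncomputable def dyadicLevel (M : ℝ) (L : ℕ) (x : ℝ) : ℕ :=
  Nat.findGreatest (fun r => x * 2 ^ r ≤ M) L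

theorem dyadicLevel_le (M : ℝ) (L : ℕ) (x : ℝ) : dyadicLevel M L x ≤ L :=
  Nat.findGreatest_le L

theorem mul_two_pow_dyadicLevel_le {M x : ℝ} (L : ℕ) (hx : x ≤ M) :
    x * 2 ^ dyadicLevel M L x ≤ M :=
  Nat.findGreatest_spec (P := fun r => x * 2 ^ r ≤ M) (Nat.zero_le L) (by simpa using hx)

theorem lt_mul_two_pow_dyadicLevel_succ {M x : ℝ} {L : ℕ} (hL : dyadicLevel M L x < L) :
    M < x * 2 ^ (dyadicLevel M L x + 1) :=
  lt_of_not_ge (Nat.findGreatest_is_greatest (Nat.lt_succ_self _) hL)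

/-- On a level `t < L` we have `M / 2 ^ t < 2 u i`, so these levels contribute `√(2L) M` by
Cauchy–Schwarz over the levels; on the top level `u i ≤ M / 2 ^ L` and `#A ≤ (2 ^ L) ^ 2` leave
at most `M`. -/
theorem sum_sqrt_dyadicLevel_le {ι : Type*} {A : Finset ι} {L : ℕ} (hA : #A ≤ 4 ^ L) {u : ι → ℝ}
    (hu : ∀ i ∈ A, 0 ≤ u i) :
    let M := √(∑ i ∈ A, u i ^ 2)
    ∑ t ∈ range (L + 1), √(M / 2 ^ t * ∑ i ∈ A with dyadicLevel M L (u i) = t, u i) ≤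
      (√(2 * L) + 1) * M := by
  intro M
  set level : ι → ℕ := fun i => dyadicLevel M L (u i)
  have hM : 0 ≤ M := Real.sqrt_nonneg _
  have hlow : ∀ t < L, M / 2 ^ t * ∑ i ∈ A with level i = t, u i ≤
      2 * ∑ i ∈ A with level i = t, u i ^ 2 := by
    intro t ht
    rw [mul_sum, mul_sum]
    refine sum_le_sum fun i hi => ?_
    obtain ⟨hiA, rfl⟩ := mem_filter.1 hi
    have hMlt : M < u i * 2 ^ (level i + 1) := lt_mul_two_pow_dyadicLevel_succ ht
    rw [pow_succ] at hMlt
    rw [div_mul_eq_mul_div, div_le_iff₀ (by positivity)]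
    nlinarith [mul_le_mul_of_nonneg_right hMlt.le (hu i hiA)]
  have hsum_top : ∑ i ∈ A with level i = L, u i ≤ 2 ^ L * M := by
    calc ∑ i ∈ A with level i = L, u i = ∑ i ∈ A with level i = L, √(u i ^ 2) :=
          sum_congr rfl fun i hi => (Real.sqrt_sq (hu i (mem_filter.1 hi).1)).symm
      _ ≤ √(#{i ∈ A | level i = L} : ℝ) * √(∑ i ∈ A with level i = L, u i ^ 2) :=
          sum_sqrt_le_sqrt_card_mul_sqrt_sum _ fun _ _ => sq_nonneg _
      _ ≤ 2 ^ L * M := by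
          refine mul_le_mul ?_ ?_ (Real.sqrt_nonneg _) (by positivity)
          · refine Real.sqrt_le_iff.2 ⟨by positivity, ?_⟩
            rw [← pow_mul, mul_comm, pow_mul]
            exact_mod_cast (card_filter_le _ _).trans (hA.trans_eq (by norm_num))
          · exact Real.sqrt_le_sqrt
              (sum_le_sum_of_subset_of_nonneg (filter_subset _ _) fun _ _ _ => sq_nonneg _)
  have htop : √(M / 2 ^ L * ∑ i ∈ A with level i = L, u i) ≤ M := by
    refine Real.sqrt_le_iff.2 ⟨hM, ?_⟩
    calc M / 2 ^ L * ∑ i ∈ A with level i = L, u i ≤ M / 2 ^ L * (2 ^ L * M) :=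
          mul_le_mul_of_nonneg_left hsum_top (by positivity)
      _ = M ^ 2 := by field_simp
  have hlevels : ∑ t ∈ range L, ∑ i ∈ A with level i = t, u i ^ 2 ≤ M ^ 2 := by
    rw [Real.sq_sqrt (sum_nonneg fun _ _ => sq_nonneg _),
      ← sum_fiberwise_of_maps_to (g := level) (t := range (L + 1))
        (fun i _ => mem_range.2 (Nat.lt_succ_of_le (dyadicLevel_le M L _))) (fun i => u i ^ 2)]
    exact sum_le_sum_of_subset_of_nonneg (range_subset_range.2 (Nat.le_succ L))
      fun _ _ _ => sum_nonneg fun _ _ => sq_nonneg _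
  calc ∑ t ∈ range (L + 1), √(M / 2 ^ t * ∑ i ∈ A with level i = t, u i)
      = ∑ t ∈ range L, √(M / 2 ^ t * ∑ i ∈ A with level i = t, u i)
          + √(M / 2 ^ L * ∑ i ∈ A with level i = L, u i) := sum_range_succ _ _
    _ ≤ ∑ t ∈ range L, √2 * √(∑ i ∈ A with level i = t, u i ^ 2) + M := by
        gcongr with t ht
        rw [← Real.sqrt_mul zero_le_two]
        exact Real.sqrt_le_sqrt (hlow t (mem_range.1 ht))
    _ ≤ √2 * (√(L : ℝ) * M) + M := by
        rw [← mul_sum]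
        gcongr
        refine (sum_sqrt_le_sqrt_card_mul_sqrt_sum _ fun _ _ => sum_nonneg fun _ _ =>
          sq_nonneg _).trans ?_
        rw [card_range]
        gcongr
        exact Real.sqrt_le_iff.2 ⟨hM, hlevels⟩
    _ = (√(2 * L) + 1) * M := by
        rw [Real.sqrt_mul zero_le_two]; ring

noncomputable def complexParts (z : ℂ) : Fin 4 → ℝ :=
  ![max z.re 0, max z.im 0, max (-z.re) 0, max (-z.im) 0]

theorem complexParts_nonneg (z : ℂ) (r : Fin 4) : 0 ≤ complexParts z r := by
  fin_cases r <;> simp [complexParts]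

theorem sum_complexParts_mul_I_pow (z : ℂ) :
    ∑ r, (complexParts z r : ℂ) * Complex.I ^ (r : ℕ) = z := by
  have hre := max_zero_sub_max_neg_zero_eq_self z.re
  have him := max_zero_sub_max_neg_zero_eq_self z.im
  apply Complex.ext <;> simp [Fin.sum_univ_four, complexParts, pow_succ] <;> linarith

theorem sum_complexParts_sq (z : ℂ) : ∑ r, complexParts z r ^ 2 = ‖z‖ ^ 2 := by
  have hsq : ∀ a : ℝ, max a 0 ^ 2 + max (-a) 0 ^ 2 = a ^ 2 := by
    intro a
    rcases le_total a 0 with h | h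
    · rw [max_eq_right h, max_eq_left (neg_nonneg.2 h)]; ring
    · rw [max_eq_left h, max_eq_right (neg_nonpos.2 h)]; ring
  rw [Complex.sq_norm, Complex.normSq_apply, Fin.sum_univ_four]
  simp only [complexParts, Matrix.cons_val]
  linarith [hsq z.re, hsq z.im]

theorem sum_sqrt_sum_complexParts_sq_le {ι : Type*} (A : Finset ι) (x : ι → ℂ) :
    ∑ r, √(∑ i ∈ A, complexParts (x i) r ^ 2) ≤ 2 * √(∑ i ∈ A, ‖x i‖ ^ 2) := by
  calc ∑ r, √(∑ i ∈ A, complexParts (x i) r ^ 2)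
      ≤ √(#(univ : Finset (Fin 4)) : ℝ) * √(∑ r, ∑ i ∈ A, complexParts (x i) r ^ 2) :=
        sum_sqrt_le_sqrt_card_mul_sqrt_sum _ fun _ _ => sum_nonneg fun _ _ => sq_nonneg _
    _ = 2 * √(∑ i ∈ A, ‖x i‖ ^ 2) := by
        rw [sum_comm, sum_congr rfl fun i _ => sum_complexParts_sq (x i), card_univ,
          Fintype.card_fin, show ((4 : ℕ) : ℝ) = 2 ^ 2 by norm_num, Real.sqrt_sq zero_le_two]

section FlatOn

variable {ι E : Type*} [SeminormedAddCommGroup E]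

def FlatOn (φ : ι → E) (A : Finset ι) (C : ℝ) : Prop :=
  ∀ T ⊆ A, ‖∑ i ∈ T, φ i‖ ≤ C * √(#T : ℝ)

theorem FlatOn.mono {φ : ι → E} {A B : Finset ι} {C : ℝ} (hφ : FlatOn φ A C) (hBA : B ⊆ A) :
    FlatOn φ B C :=
  fun T hT => hφ T (hT.trans hBA)

variable [DecidableEq ι]

section Real

variable [NormedSpace ℝ E]

theorem FlatOn.norm_sum_smul_le_of_mem_unitInterval {φ : ι → E} {A : Finset ι} {C : ℝ}
    (hφ : FlatOn φ A C) (hC : 0 ≤ C) {p : ι → ℝ} (hp : ∀ i ∈ A, p i ∈ Set.Icc 0 1) :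
    ‖∑ i ∈ A, p i • φ i‖ ≤ C * √(∑ i ∈ A, p i) := by
  rw [← sum_bernoulliWeight_smul_sum]
  calc ‖∑ T ∈ A.powerset, bernoulliWeight p A T • ∑ i ∈ T, φ i‖
      ≤ ∑ T ∈ A.powerset, bernoulliWeight p A T * (C * √(#T : ℝ)) := by
        refine (norm_sum_le _ _).trans (sum_le_sum fun T hT => ?_)
        have hw := bernoulliWeight_nonneg hp (mem_powerset.1 hT)
        rw [norm_smul, Real.norm_of_nonneg hw]
        exact mul_le_mul_of_nonneg_left (hφ T (mem_powerset.1 hT)) hw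
    _ = C * ∑ T ∈ A.powerset, bernoulliWeight p A T * √(#T : ℝ) := by
        rw [mul_sum]; exact sum_congr rfl fun T _ => by ring
    _ ≤ C * √(∑ i ∈ A, p i) :=
        mul_le_mul_of_nonneg_left (sum_bernoulliWeight_mul_sqrt_card_le hp) hC

theorem FlatOn.norm_sum_smul_le {φ : ι → E} {A : Finset ι} {C : ℝ} (hφ : FlatOn φ A C)
    (hC : 0 ≤ C) {a : ι → ℝ} {m : ℝ} (ha : ∀ i ∈ A, a i ∈ Set.Icc 0 m) :
    ‖∑ i ∈ A, a i • φ i‖ ≤ C * √(m * ∑ i ∈ A, a i) := by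
  rcases le_or_gt m 0 with hm | hm
  · have hzero : ∀ i ∈ A, a i = 0 := fun i hi => le_antisymm ((ha i hi).2.trans hm) (ha i hi).1
    rw [sum_congr rfl fun i hi => by rw [hzero i hi, zero_smul], sum_const_zero, norm_zero]
    positivity
  have hscaled : ∀ i ∈ A, a i / m ∈ Set.Icc 0 1 := fun i hi =>
    ⟨div_nonneg (ha i hi).1 hm.le, div_le_one_of_le₀ (ha i hi).2 hm.le⟩
  have hsum : ∑ i ∈ A, a i • φ i = m • ∑ i ∈ A, (a i / m) • φ i := by
    rw [smul_sum]; exact sum_congr rfl fun i _ => by rw [smul_smul, mul_div_cancel₀ _ hm.ne']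
  calc ‖∑ i ∈ A, a i • φ i‖ ≤ m * (C * √(∑ i ∈ A, a i / m)) := by
        rw [hsum, norm_smul, Real.norm_of_nonneg hm.le]
        exact mul_le_mul_of_nonneg_left (hφ.norm_sum_smul_le_of_mem_unitInterval hC hscaled) hm.le
    _ = C * √(m * ∑ i ∈ A, a i) := by
        rw [← sum_div, mul_left_comm, ← Real.sqrt_sq hm.le, ← Real.sqrt_mul (sq_nonneg m),
          Real.sqrt_sq hm.le]
        congr 2; field_simp

theorem FlatOn.norm_sum_smul_le_of_nonneg {φ : ι → E} {A : Finset ι} {C : ℝ}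
    (hφ : FlatOn φ A C) (hC : 0 ≤ C) {L : ℕ} (hA : #A ≤ 4 ^ L) {u : ι → ℝ}
    (hu : ∀ i ∈ A, 0 ≤ u i) :
    ‖∑ i ∈ A, u i • φ i‖ ≤ C * ((√(2 * L) + 1) * √(∑ i ∈ A, u i ^ 2)) := by
  set M := √(∑ i ∈ A, u i ^ 2)
  have hlevel : ∀ t, ∀ i ∈ A.filter (fun i => dyadicLevel M L (u i) = t),
      u i ∈ Set.Icc 0 (M / 2 ^ t) := by
    intro t i hi
    obtain ⟨hiA, rfl⟩ := mem_filter.1 hi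
    exact ⟨hu i hiA, (le_div_iff₀ (by positivity)).2
      (mul_two_pow_dyadicLevel_le L (le_sqrt_sum_sq_of_mem hiA))⟩
  rw [← sum_fiberwise_of_maps_to (g := fun i => dyadicLevel M L (u i)) (t := range (L + 1))
    fun i _ => mem_range.2 (Nat.lt_succ_of_le (dyadicLevel_le M L _))]
  calc ‖∑ t ∈ range (L + 1), ∑ i ∈ A with dyadicLevel M L (u i) = t, u i • φ i‖
      ≤ ∑ t ∈ range (L + 1), C * √(M / 2 ^ t * ∑ i ∈ A with dyadicLevel M L (u i) = t, u i) :=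
        (norm_sum_le _ _).trans <| sum_le_sum fun t _ =>
          (hφ.mono (filter_subset _ _)).norm_sum_smul_le hC (hlevel t)
    _ ≤ C * ((√(2 * L) + 1) * M) := by
        rw [← mul_sum]
        exact mul_le_mul_of_nonneg_left (sum_sqrt_dyadicLevel_le hA hu) hC

end Real

theorem FlatOn.norm_sum_complex_smul_le [NormedSpace ℂ E] {φ : ι → E} {A : Finset ι} {C : ℝ}
    (hφ : FlatOn φ A C) (hC : 0 ≤ C) {L : ℕ} (hA : #A ≤ 4 ^ L) (x : ι → ℂ) :
    ‖∑ i ∈ A, x i • φ i‖ ≤ C * ((√(2 * L) + 1) * (2 * √(∑ i ∈ A, ‖x i‖ ^ 2))) := by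
  have hsplit : ∑ i ∈ A, x i • φ i =
      ∑ r : Fin 4, Complex.I ^ (r : ℕ) • ∑ i ∈ A, complexParts (x i) r • φ i := by
    simp_rw [smul_sum, sum_comm (s := univ)]
    refine sum_congr rfl fun i _ => ?_
    conv_lhs => rw [← sum_complexParts_mul_I_pow (x i)]
    rw [sum_smul]
    refine sum_congr rfl fun r _ => ?_
    rw [mul_comm, mul_smul, Complex.coe_smul]
  rw [hsplit]
  calc ‖∑ r : Fin 4, Complex.I ^ (r : ℕ) • ∑ i ∈ A, complexParts (x i) r • φ i‖
      ≤ ∑ r : Fin 4, C * ((√(2 * L) + 1) * √(∑ i ∈ A, complexParts (x i) r ^ 2)) := by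
        refine (norm_sum_le _ _).trans (sum_le_sum fun r _ => ?_)
        rw [norm_smul, norm_pow, Complex.norm_I, one_pow, one_mul]
        exact hφ.norm_sum_smul_le_of_nonneg hC hA fun i _ => complexParts_nonneg _ _
    _ ≤ C * ((√(2 * L) + 1) * (2 * √(∑ i ∈ A, ‖x i‖ ^ 2))) := by
        rw [← mul_sum, ← mul_sum]
        gcongr
        exact sum_sqrt_sum_complexParts_sq_le A x

end FlatOn

theorem sum_sum_mul_sqrt_add_ite_le {κ : Type*} [DecidableEq κ] (s : Finset κ) {σ : κ → ℝ}
    (hσ : ∀ p ∈ s, 0 ≤ σ p) {D : ℝ} (hD : 0 ≤ D) :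
    ∑ p ∈ s, ∑ q ∈ s, (D * (√(σ p) * √(σ q)) + if p = q then D * σ p else 0) ≤
      D * (#s + 1) * ∑ p ∈ s, σ p := by
  have hsum : ∑ p ∈ s, ∑ q ∈ s, (D * (√(σ p) * √(σ q)) + if p = q then D * σ p else 0) =
      D * (∑ p ∈ s, √(σ p)) ^ 2 + D * ∑ p ∈ s, σ p := by
    rw [sq, sum_mul_sum, mul_sum, mul_sum, ← sum_add_distrib]
    refine sum_congr rfl fun p hp => ?_
    rw [sum_add_distrib, sum_ite_eq, if_pos hp, mul_sum]
  have hCS : (∑ p ∈ s, √(σ p)) ^ 2 ≤ #s * ∑ p ∈ s, σ p := by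
    refine sq_sum_le_card_mul_sum_sq.trans_eq ?_
    rw [sum_congr rfl fun p hp => Real.sq_sqrt (hσ p hp)]
  rw [hsum]
  nlinarith [mul_le_mul_of_nonneg_left hCS hD]

section FlatRIP

variable {ι : Type*} [DecidableEq ι]

def FlatRIP (c : ι → ι → ℂ) (k : ℕ) (δ : ℝ) : Prop :=
  ∀ A B : Finset ι, Disjoint A B → #A ≤ k → #B ≤ k →
    ‖∑ i ∈ A, ∑ j ∈ B, c i j‖ ≤ δ * √((#A : ℝ) * #B)

variable {c : ι → ι → ℂ} {k L : ℕ} {δ : ℝ}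

theorem FlatRIP.norm_sum_sum_mul_le (hc : FlatRIP c k δ) (hδ : 0 ≤ δ) (hk : k ≤ 4 ^ L)
    {A B : Finset ι} (hAB : Disjoint A B) (hA : #A ≤ k) (hB : #B ≤ k) (x y : ι → ℂ) :
    ‖∑ i ∈ A, ∑ j ∈ B, x i * y j * c i j‖ ≤
      4 * δ * (√(2 * L) + 1) ^ 2 * (√(∑ i ∈ A, ‖x i‖ ^ 2) * √(∑ j ∈ B, ‖y j‖ ^ 2)) := by
  set K := √(2 * (L : ℝ)) + 1
  set Y := √(∑ j ∈ B, ‖y j‖ ^ 2)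
  have hcol : ∀ T ⊆ A, ‖∑ j ∈ B, y j • ∑ i ∈ T, c i j‖ ≤ δ * √(#T : ℝ) * (K * (2 * Y)) := by
    intro T hT
    refine FlatOn.norm_sum_complex_smul_le (fun U hU => ?_) (by positivity) (hB.trans hk) y
    rw [sum_comm, mul_assoc, ← Real.sqrt_mul (Nat.cast_nonneg _)]
    exact hc T U (hAB.mono hT hU) ((card_le_card hT).trans hA) ((card_le_card hU).trans hB)
  have hrow : FlatOn (fun i => ∑ j ∈ B, y j • c i j) A (2 * δ * K * Y) := by
    intro T hT
    have := hcol T hT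
    rw [sum_comm]
    simp_rw [← smul_sum]
    linarith
  calc ‖∑ i ∈ A, ∑ j ∈ B, x i * y j * c i j‖ = ‖∑ i ∈ A, x i • ∑ j ∈ B, y j • c i j‖ := by
        simp_rw [smul_sum, smul_eq_mul, mul_assoc]
    _ ≤ 2 * δ * K * Y * (K * (2 * √(∑ i ∈ A, ‖x i‖ ^ 2))) :=
        hrow.norm_sum_complex_smul_le (by positivity) (hA.trans hk) x
    _ = 4 * δ * K ^ 2 * (√(∑ i ∈ A, ‖x i‖ ^ 2) * Y) := by ring

theorem FlatRIP.offDiag (hc : FlatRIP c k δ) :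
    FlatRIP (fun i j => if i = j then 0 else c i j) k δ := by
  intro A B hAB hA hB
  refine (congrArg _ (sum_congr rfl fun i hi => sum_congr rfl fun j hj => if_neg ?_)).trans_le
    (hc A B hAB hA hB)
  exact disjoint_left.1 hAB hi ∘ (· ▸ hj)

/-- Decoupling: a pair `i ≠ j` of `A` lies in `T × (A \ T)` for a quarter of the random splits
`T ⊆ A`, so the off-diagonal sum is four times an average of sums over disjoint blocks. -/
theorem FlatRIP.norm_sum_sum_mul_conj_le_of_diag_eq_zero (hc : FlatRIP c k δ) (hδ : 0 ≤ δ)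
    (hk : k ≤ 4 ^ L) (hdiag : ∀ i, c i i = 0) {A : Finset ι} (hA : #A ≤ k) (x : ι → ℂ) :
    ‖∑ i ∈ A, ∑ j ∈ A, x i * conj (x j) * c i j‖ ≤
      8 * δ * (√(2 * L) + 1) ^ 2 * ∑ i ∈ A, ‖x i‖ ^ 2 := by
  set K := √(2 * (L : ℝ)) + 1
  set w := bernoulliWeight (fun _ => (1 / 2 : ℝ)) A
  have hw : ∀ T ∈ A.powerset, 0 ≤ w T := fun T hT =>
    bernoulliWeight_nonneg (fun _ _ => ⟨by norm_num, by norm_num⟩) (mem_powerset.1 hT)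
  have hdecouple : ∑ i ∈ A, ∑ j ∈ A, x i * conj (x j) * c i j =
      (4 : ℝ) • ∑ T ∈ A.powerset, w T • ∑ i ∈ T, ∑ j ∈ A \ T, x i * conj (x j) * c i j := by
    rw [sum_bernoulliWeight_smul_sum_sum_sdiff _ A _ fun i => by rw [hdiag, mul_zero]]
    simp_rw [smul_sum, smul_smul]
    norm_num
  have hsplit : ∀ T ∈ A.powerset,
      ‖∑ i ∈ T, ∑ j ∈ A \ T, x i * conj (x j) * c i j‖ ≤
        2 * δ * K ^ 2 * ∑ i ∈ A, ‖x i‖ ^ 2 := by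
    intro T hT
    have hTA := mem_powerset.1 hT
    refine (hc.norm_sum_sum_mul_le hδ hk disjoint_sdiff ((card_le_card hTA).trans hA)
      ((card_le_card sdiff_subset).trans hA) x _).trans ?_
    simp only [Complex.norm_conj]
    have hAM := two_mul_le_add_sq (√(∑ i ∈ T, ‖x i‖ ^ 2)) (√(∑ i ∈ A \ T, ‖x i‖ ^ 2))
    rw [Real.sq_sqrt (sum_nonneg fun _ _ => sq_nonneg _),
      Real.sq_sqrt (sum_nonneg fun _ _ => sq_nonneg _), add_comm (∑ i ∈ T, _), sum_sdiff hTA] at hAM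
    have : 0 ≤ 2 * δ * K ^ 2 := by positivity
    nlinarith
  calc ‖∑ i ∈ A, ∑ j ∈ A, x i * conj (x j) * c i j‖
      ≤ 4 * ∑ T ∈ A.powerset, w T * (2 * δ * K ^ 2 * ∑ i ∈ A, ‖x i‖ ^ 2) := by
        rw [hdecouple, norm_smul, Real.norm_of_nonneg (by norm_num)]
        refine mul_le_mul_of_nonneg_left ((norm_sum_le _ _).trans (sum_le_sum fun T hT => ?_))
          (by norm_num)
        rw [norm_smul, Real.norm_of_nonneg (hw T hT)]
        exact mul_le_mul_of_nonneg_left (hsplit T hT) (hw T hT)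
    _ = 8 * δ * K ^ 2 * ∑ i ∈ A, ‖x i‖ ^ 2 := by
        rw [← sum_mul, sum_bernoulliWeight]; ring

theorem exists_fiber_card_le {S : Finset ι} {m k : ℕ} (hk : 0 < k) (hS : #S ≤ m * k) :
    ∃ g : ι → ℕ, (∀ i ∈ S, g i ∈ range m) ∧ ∀ p, #{i ∈ S | g i = p} ≤ k := by
  set f : ι → ℕ := fun i => if h : i ∈ S then (S.equivFin ⟨i, h⟩ : ℕ) else 0
  have hf : ∀ i ∈ S, f i < #S := fun i hi => by simp [f, hi]
  have hinj : Set.InjOn f S := fun i hi j hj hij => by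
    simp only [f, dif_pos (mem_coe.1 hi), dif_pos (mem_coe.1 hj), Fin.val_inj] at hij
    exact congrArg Subtype.val (S.equivFin.injective hij)
  refine ⟨fun i => f i / k, fun i hi => mem_range.2 ?_, fun p => ?_⟩
  · exact (Nat.div_lt_iff_lt_mul hk).2 ((hf i hi).trans_le hS)
  · calc #{i ∈ S | f i / k = p} ≤ #(Ico (p * k) (p * k + k)) := by
          refine card_le_card_of_injOn f (fun i hi => ?_) (hinj.mono (filter_subset _ _))
          obtain ⟨-, rfl⟩ := mem_filter.1 hi
          exact mem_Ico.2 ⟨Nat.div_mul_le_self _ _, Nat.lt_div_mul_add hk⟩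
      _ = k := by simp

theorem FlatRIP.norm_sum_sum_mul_conj_le (hc : FlatRIP c k δ) (hδ : 0 ≤ δ) (hk : k ≤ 4 ^ L)
    (hk0 : 0 < k) (hdiag : ∀ i, c i i = 0) {S : Finset ι} {m : ℕ} (hS : #S ≤ m * k)
    (x : ι → ℂ) :
    ‖∑ i ∈ S, ∑ j ∈ S, x i * conj (x j) * c i j‖ ≤
      4 * (m + 1) * δ * (√(2 * L) + 1) ^ 2 * ∑ i ∈ S, ‖x i‖ ^ 2 := by
  obtain ⟨g, hg, hcard⟩ := exists_fiber_card_le hk0 hS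
  set D := 4 * δ * (√(2 * (L : ℝ)) + 1) ^ 2
  have hD : 0 ≤ D := by positivity
  set P : ℕ → Finset ι := fun p => {i ∈ S | g i = p}
  set σ : ℕ → ℝ := fun p => ∑ i ∈ P p, ‖x i‖ ^ 2
  have hσ : ∀ p, 0 ≤ σ p := fun p => sum_nonneg fun _ _ => sq_nonneg _
  have hσsum : ∑ p ∈ range m, σ p = ∑ i ∈ S, ‖x i‖ ^ 2 := sum_fiberwise_of_maps_to hg _
  have hblocks : ∑ i ∈ S, ∑ j ∈ S, x i * conj (x j) * c i j =
      ∑ p ∈ range m, ∑ q ∈ range m, ∑ i ∈ P p, ∑ j ∈ P q, x i * conj (x j) * c i j := by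
    rw [← sum_fiberwise_of_maps_to hg]
    refine sum_congr rfl fun p _ => ?_
    rw [sum_comm, ← sum_fiberwise_of_maps_to hg]
    exact sum_congr rfl fun q _ => sum_comm
  have hblock : ∀ p q, ‖∑ i ∈ P p, ∑ j ∈ P q, x i * conj (x j) * c i j‖ ≤
      D * (√(σ p) * √(σ q)) + if p = q then D * σ p else 0 := by
    intro p q
    rcases eq_or_ne p q with rfl | hpq
    · rw [if_pos rfl, Real.mul_self_sqrt (hσ p)]
      exact (hc.norm_sum_sum_mul_conj_le_of_diag_eq_zero hδ hk hdiag (hcard p) x).trans_eq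
        (by ring)
    · rw [if_neg hpq, add_zero]
      have hPQ : Disjoint (P p) (P q) := disjoint_filter.2 fun i _ hp hq => hpq (hp ▸ hq)
      simpa [Complex.norm_conj, D, mul_assoc] using
        hc.norm_sum_sum_mul_le hδ hk hPQ (hcard p) (hcard q) x (fun j => conj (x j))
  calc ‖∑ i ∈ S, ∑ j ∈ S, x i * conj (x j) * c i j‖
      ≤ ∑ p ∈ range m, ∑ q ∈ range m, (D * (√(σ p) * √(σ q)) + if p = q then D * σ p else 0) := by
        rw [hblocks]
        exact (norm_sum_le _ _).trans <| sum_le_sum fun p _ =>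
          (norm_sum_le _ _).trans <| sum_le_sum fun q _ => hblock p q
    _ ≤ D * (#(range m) + 1) * ∑ p ∈ range m, σ p :=
        sum_sum_mul_sqrt_add_ite_le _ (fun p _ => hσ p) hD
    _ = 4 * (m + 1) * δ * (√(2 * L) + 1) ^ 2 * ∑ i ∈ S, ‖x i‖ ^ 2 := by
        rw [hσsum, card_range]; ring

theorem FlatRIP.norm_sum_sum_mul_conj_le_of_card_support [Fintype ι] (hc : FlatRIP c k δ)
    (hδ : 0 ≤ δ) (hk : k ≤ 4 ^ L) (hk0 : 0 < k) (hdiag : ∀ i, c i i = 0) {x : ι → ℂ} {m : ℕ}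
    (hx : #{j | x j ≠ 0} ≤ m * k) :
    ‖∑ i, ∑ j, x i * conj (x j) * c i j‖ ≤
      4 * (m + 1) * δ * (√(2 * L) + 1) ^ 2 * ∑ i, ‖x i‖ ^ 2 := by
  set S : Finset ι := {j | x j ≠ 0}
  have hzero : ∀ i ∉ S, x i = 0 := fun i hi => by simpa [S] using hi
  have hsupport : ∑ i, ∑ j, x i * conj (x j) * c i j =
      ∑ i ∈ S, ∑ j ∈ S, x i * conj (x j) * c i j := by
    refine (sum_subset (subset_univ S) fun i _ hi => by simp [hzero i hi]).symm.trans
      (sum_congr rfl fun i _ => (sum_subset (subset_univ S) fun j _ hj => ?_).symm)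
    simp [hzero j hj]
  rw [hsupport]
  refine (hc.norm_sum_sum_mul_conj_le hδ hk hk0 hdiag hx x).trans ?_
  gcongr
  exact subset_univ S

end FlatRIP

theorem log_four_mul_clog_sub_one_le_log {k : ℕ} (hk : 1 < k) :
    Real.log 4 * ((Nat.clog 4 k : ℝ) - 1) ≤ Real.log k := by
  have hpow : 4 ^ (Nat.clog 4 k - 1) < k := Nat.pow_pred_clog_lt_self (by norm_num) hk
  have hL : 1 ≤ Nat.clog 4 k := Nat.succ_le_of_lt (Nat.clog_pos (by norm_num) hk)
  calc Real.log 4 * ((Nat.clog 4 k : ℝ) - 1) = Real.log ((4 : ℝ) ^ (Nat.clog 4 k - 1)) := by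
        rw [Real.log_pow, Nat.cast_sub hL, Nat.cast_one, mul_comm]
    _ ≤ Real.log k := Real.log_le_log (by positivity) (by exact_mod_cast hpow.le)

-- With `L = ⌈log₄ k⌉ ≥ 5` we have `(√(2L) + 1)² ≤ 10L/3 + 1` and `log k > (L - 1) log 4`.
theorem four_mul_two_mul_add_one_mul_sq_le_log {k s : ℕ} (hk : 2 ^ 10 ≤ k) (hs : 1 ≤ s) :
    4 * ((2 * s : ℕ) + 1 : ℝ) * (√(2 * Nat.clog 4 k) + 1) ^ 2 ≤ 44 * s * Real.log k := by
  set L := Nat.clog 4 k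
  have hL : (5 : ℝ) ≤ L := by
    have : 4 < L := (Nat.lt_clog_iff_pow_lt (by norm_num)).2 (lt_of_lt_of_le (by norm_num) hk)
    exact_mod_cast this
  have hlog : Real.log 4 * ((L : ℝ) - 1) ≤ Real.log k :=
    log_four_mul_clog_sub_one_le_log (lt_of_lt_of_le (by norm_num) hk)
  have hlog4 : 1.386 < Real.log 4 := by
    rw [show (4 : ℝ) = 2 ^ 2 by norm_num, Real.log_pow]
    linarith [Real.log_two_gt_d9]
  set r := √(2 * (L : ℝ))
  have hr : r ^ 2 = 2 * L := Real.sq_sqrt (by positivity)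
  have hr0 : 0 ≤ r := Real.sqrt_nonneg _
  have hrL : r ≤ 2 / 3 * L := by nlinarith
  have hs' : (1 : ℝ) ≤ s := by exact_mod_cast hs
  push_cast
  nlinarith [mul_le_mul_of_nonneg_left hlog (by positivity : (0 : ℝ) ≤ s),
    mul_le_mul_of_nonneg_right hlog4.le (by linarith : (0 : ℝ) ≤ L - 1)]

theorem sum_norm_mulVec_sq {m n : Type*} [Fintype m] [Fintype n] (Φ : Matrix m n ℂ) (x : n → ℂ) :
    ((∑ r, ‖Φ.mulVec x r‖ ^ 2 : ℝ) : ℂ) =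
      ∑ i, ∑ j, x i * conj (x j) * ∑ r, Φ r i * conj (Φ r j) := by
  push_cast
  simp_rw [← Complex.mul_conj', Matrix.mulVec, dotProduct, map_sum, sum_mul_sum, map_mul, mul_sum]
  rw [sum_comm]
  refine sum_congr rfl fun i _ => ?_
  rw [sum_comm]
  exact sum_congr rfl fun j _ => sum_congr rfl fun r _ => by ring

theorem sum_sum_mul_conj_eq_of_diag_eq_one {n : Type*} [Fintype n] [DecidableEq n] {c : n → n → ℂ}
    (hc : ∀ i, c i i = 1) (x : n → ℂ) :
    ∑ i, ∑ j, x i * conj (x j) * c i j =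
      ∑ i, (‖x i‖ : ℂ) ^ 2 + ∑ i, ∑ j, x i * conj (x j) * if i = j then 0 else c i j := by
  rw [← sum_add_distrib]
  refine sum_congr rfl fun i _ => ?_
  rw [← add_sum_erase _ _ (mem_univ i), ← add_sum_erase _ _ (mem_univ i), if_pos rfl, hc,
    mul_zero, zero_add, mul_one, Complex.mul_conj', add_right_inj]
  exact sum_congr rfl fun j hj => by rw [if_neg (ne_of_mem_erase hj).symm]

theorem sum_norm_mulVec_sq_eq_add_re {m n : Type*} [Fintype m] [Fintype n] [DecidableEq n]
    {Φ : Matrix m n ℂ} (hunit : ∀ j, ∑ r, ‖Φ r j‖ ^ 2 = 1) (x : n → ℂ) :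
    ∑ r, ‖Φ.mulVec x r‖ ^ 2 = ∑ j, ‖x j‖ ^ 2 +
      (∑ i, ∑ j, x i * conj (x j) * if i = j then 0 else ∑ r, Φ r i * conj (Φ r j)).re := by
  have hdiag : ∀ j, ∑ r, Φ r j * conj (Φ r j) = 1 := fun j => by
    simp_rw [Complex.mul_conj', ← Complex.ofReal_pow, ← Complex.ofReal_sum, hunit,
      Complex.ofReal_one]
  have := congrArg Complex.re (sum_norm_mulVec_sq Φ x)
  rw [sum_sum_mul_conj_eq_of_diag_eq_one hdiag, Complex.add_re] at this
  simpa only [Complex.ofReal_re, Complex.re_sum, ← Complex.ofReal_pow] using this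

open Finset in
theorem stmt4 (n N k s : ℕ) (hk : 2 ^ 10 ≤ k) (hs : 1 ≤ s)
    (Φ : Matrix (Fin n) (Fin N) ℂ) (δ : ℝ) (hδ : 0 ≤ δ)
    (hunit : ∀ j : Fin N, ∑ i : Fin n, ‖Φ i j‖ ^ 2 = 1)
    (hflat : ∀ J₁ J₂ : Finset (Fin N), Disjoint J₁ J₂ →
      J₁.card ≤ k → J₂.card ≤ k →
      ‖∑ j₁ ∈ J₁, ∑ j₂ ∈ J₂, ∑ i : Fin n, Φ i j₁ * (starRingEnd ℂ) (Φ i j₂)‖ ≤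
        δ * Real.sqrt (J₁.card * J₂.card)) :
    ∀ x : Fin N → ℂ, (Finset.univ.filter (fun j => x j ≠ 0)).card ≤ 2 * s * k →
      (1 - 44 * s * δ * Real.log k) * ∑ j : Fin N, ‖x j‖ ^ 2 ≤
          ∑ i : Fin n, ‖Φ.mulVec x i‖ ^ 2 ∧
        ∑ i : Fin n, ‖Φ.mulVec x i‖ ^ 2 ≤
          (1 + 44 * s * δ * Real.log k) * ∑ j : Fin N, ‖x j‖ ^ 2 := by
  intro x hx
  set c₀ : Fin N → Fin N → ℂ := fun i j => if i = j then 0 else ∑ r, Φ r i * conj (Φ r j)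
  set E := ∑ i, ∑ j, x i * conj (x j) * c₀ i j
  have hσ : 0 ≤ ∑ j, ‖x j‖ ^ 2 := sum_nonneg fun _ _ => sq_nonneg _
  have hE : ‖E‖ ≤ 44 * s * δ * Real.log k * ∑ j, ‖x j‖ ^ 2 := by
    refine ((FlatRIP.offDiag hflat).norm_sum_sum_mul_conj_le_of_card_support hδ
      (Nat.le_pow_clog (by norm_num) k) (by omega) (fun i => if_pos rfl) hx).trans ?_
    have := mul_le_mul_of_nonneg_right (four_mul_two_mul_add_one_mul_sq_le_log hk hs)
      (mul_nonneg hδ hσ)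
    linarith
  have hre := abs_le.1 ((Complex.abs_re_le_norm E).trans hE)
  rw [sum_norm_mulVec_sq_eq_add_re hunit x]
  constructor <;> linarith [hre.1, hre.2]
end

section
/- Let M ≥ 2 and τ = τ_M be the solution of (1/M)^{2τ} + ((M−1)/M)^τ = 1. For any nonnegative reals U_0,...,U_{M−1} and V_0,...,V_{M−1}, one has ∑_{μ=0}^{2M−2} max_{κ+λ=μ, 0≤κ,λ≤M−1} (U_κ V_λ)^τ ≥ (∑_{κ=0}^{M−1} U_κ)^τ · (∑_{λ=0}^{M−1} V_λ)^τ. -/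
open Finset Real

noncomputable def phiF (τ : ℝ) : ℝ → ℝ := fun y => y ^ (2*τ) + (1-y) ^ τ - 1

noncomputable def phiD (τ : ℝ) : ℝ → ℝ := fun y => 2*τ*y^(2*τ-1) - τ*(1-y)^(τ-1)

noncomputable def chiF (τ : ℝ) : ℝ → ℝ :=
  fun y => Real.log 2 + (2*τ-1) * Real.log y - (τ-1) * Real.log (1-y)

lemma phiF_hasDeriv (τ : ℝ) {y : ℝ} (hy0 : 0 < y) (hy1 : y < 1) :
    HasDerivAt (phiF τ) (phiD τ y) y := by
  have h1 : HasDerivAt (fun y:ℝ => y ^ (2*τ)) ((2*τ) * y^(2*τ-1)) y :=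
    Real.hasDerivAt_rpow_const (Or.inl (ne_of_gt hy0))
  have h2 : HasDerivAt (fun y:ℝ => 1 - y) (-1) y := by
    simpa using (hasDerivAt_id y).const_sub 1
  have h3 := HasDerivAt.rpow_const (p := τ) h2 (Or.inl (ne_of_gt (by linarith : (0:ℝ) < 1 - y)))
  have h6 : phiD τ y = 2*τ*y^(2*τ-1) + -1*τ*(1-y)^(τ-1) := by unfold phiD; ring
  rw [h6]
  exact (h1.add h3).sub_const 1

lemma phiF_cont (τ : ℝ) (hτ0 : 0 < τ) : ContinuousOn (phiF τ) (Set.Icc 0 1) := by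
  unfold phiF
  apply ContinuousOn.sub
  · apply ContinuousOn.add
    · exact continuousOn_id.rpow_const (fun y _ => Or.inr (by positivity))
    · exact (continuousOn_const.sub continuousOn_id).rpow_const (fun y _ => Or.inr hτ0.le)
  · exact continuousOn_const

lemma chiF_cont (τ : ℝ) {a b : ℝ} (ha : 0 < a) (hb : b < 1) :
    ContinuousOn (chiF τ) (Set.Icc a b) := by
  unfold chiF
  apply ContinuousOn.sub
  · apply ContinuousOn.add continuousOn_const
    exact continuousOn_const.mul (continuousOn_id.log
      (fun y hy => ne_of_gt (lt_of_lt_of_le ha hy.1)))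
  · refine continuousOn_const.mul ((continuousOn_const.sub continuousOn_id).log ?_)
    intro y hy
    have h2 := hy.2
    have : (0:ℝ) < 1 - y := by simp only [Set.mem_Icc] at hy; linarith [hy.2]
    exact ne_of_gt this

lemma chiF_hasDeriv (τ : ℝ) {y : ℝ} (hy0 : 0 < y) (hy1 : y < 1) :
    HasDerivAt (chiF τ) ((2*τ-1-τ*y)/(y*(1-y))) y := by
  have h1y : (0:ℝ) < 1 - y := by linarith
  have hlog1 : HasDerivAt Real.log y⁻¹ y := Real.hasDerivAt_log (ne_of_gt hy0)
  have hsub : HasDerivAt (fun y:ℝ => 1 - y) (-1) y := by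
    simpa using (hasDerivAt_id y).const_sub 1
  have hlog2 : HasDerivAt (fun y:ℝ => Real.log (1-y)) ((1-y)⁻¹ * (-1)) y :=
    (Real.hasDerivAt_log (ne_of_gt h1y)).comp y hsub
  have h5 := ((hlog1.const_mul (2*τ-1)).const_add (Real.log 2)).sub
    (hlog2.const_mul (τ-1))
  have h6 : (2*τ-1-τ*y)/(y*(1-y)) = (2*τ-1) * y⁻¹ - (τ-1) * ((1-y)⁻¹ * (-1)) := by
    field_simp
    ring
  rw [h6]
  exact h5

lemma phiD_sign (τ : ℝ) (hτ0 : 0 < τ) {y : ℝ} (hy0 : 0 < y) (hy1 : y < 1) :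
    (0 < phiD τ y ↔ 0 < chiF τ y) ∧ (phiD τ y < 0 ↔ chiF τ y < 0) := by
  have h1y : (0:ℝ) < 1 - y := by linarith
  have hyp : (0:ℝ) < y^(2*τ-1) := Real.rpow_pos_of_pos hy0 _
  have hP : (0:ℝ) < 2 * y^(2*τ-1) := by linarith
  have hQ : (0:ℝ) < (1-y)^(τ-1) := Real.rpow_pos_of_pos h1y _
  have hlogP : Real.log (2 * y^(2*τ-1)) = Real.log 2 + (2*τ-1) * Real.log y := by
    rw [Real.log_mul (by norm_num) (ne_of_gt hyp), Real.log_rpow hy0]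
  have hlogQ : Real.log ((1-y)^(τ-1)) = (τ-1) * Real.log (1-y) := Real.log_rpow h1y _
  have hχeq : chiF τ y = Real.log (2 * y^(2*τ-1)) - Real.log ((1-y)^(τ-1)) := by
    unfold chiF
    rw [hlogP, hlogQ]
  have hφdeq : phiD τ y = τ * (2*y^(2*τ-1) - (1-y)^(τ-1)) := by unfold phiD; ring
  constructor
  · constructor
    · intro h
      have h2 : (1-y)^(τ-1) < 2*y^(2*τ-1) := by nlinarith
      have h3 := (Real.log_lt_log_iff hQ hP).mpr h2
      rw [hχeq]; linarith
    · intro h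
      rw [hχeq] at h
      have h2 : Real.log ((1-y)^(τ-1)) < Real.log (2*y^(2*τ-1)) := by linarith
      have h3 := (Real.log_lt_log_iff hQ hP).mp h2
      rw [hφdeq]; nlinarith
  · constructor
    · intro h
      have h2 : 2*y^(2*τ-1) < (1-y)^(τ-1) := by nlinarith
      have h3 := (Real.log_lt_log_iff hP hQ).mpr h2
      rw [hχeq]; linarith
    · intro h
      rw [hχeq] at h
      have h2 : Real.log (2*y^(2*τ-1)) < Real.log ((1-y)^(τ-1)) := by linarith
      have h3 := (Real.log_lt_log_iff hP hQ).mp h2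
      rw [hφdeq]; nlinarith

set_option maxHeartbeats 1000000 in
/-- Analytic core: for `1/M ≤ q ≤ 1`, `1 ≤ q^(2τ) + (1-q)^τ`. -/
lemma phi_lemma (M : ℕ) (hM : 2 ≤ M) (τ : ℝ) (hτ₁ : 1 / 2 < τ) (hτ₂ : τ < 1)
    (hτ : (1 / M : ℝ) ^ (2 * τ) + ((M - 1 : ℝ) / M) ^ τ = 1) :
    ∀ q : ℝ, 1 / M ≤ q → q ≤ 1 → 1 ≤ q ^ (2 * τ) + (1 - q) ^ τ := by
  have hτ0 : 0 < τ := by linarith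
  have hM0 : (0:ℝ) < M := by exact_mod_cast (by omega : 0 < M)
  set m : ℝ := 1 / (M:ℝ) with hmdef
  have hm0 : 0 < m := by positivity
  have hm1 : m < 1 := by
    rw [hmdef, div_lt_one hM0]
    exact_mod_cast (by omega : 1 < M)
  have hmeq : ((M:ℝ) - 1) / M = 1 - m := by rw [hmdef]; field_simp
  have hφm : phiF τ m = 0 := by
    have h0 : m ^ (2*τ) + (1 - m) ^ τ = 1 := by rw [← hmeq, hmdef]; exact hτ
    unfold phiF; linarith
  have hφ1 : phiF τ 1 = 0 := by
    unfold phiF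
    rw [Real.one_rpow, sub_self, Real.zero_rpow (ne_of_gt hτ0)]; ring
  set c : ℝ := (2*τ - 1)/τ with hcdef
  have hc0 : 0 < c := div_pos (by linarith) hτ0
  have hc1 : c < 1 := by rw [hcdef, div_lt_one hτ0]; linarith
  have hτc : τ * c = 2*τ - 1 := by rw [hcdef]; field_simp
  intro q hqm hq1
  rcases eq_or_lt_of_le hqm with heq | hqm'
  · have h0 : phiF τ q = 0 := by rw [← heq]; exact hφm
    unfold phiF at h0; linarith
  rcases eq_or_lt_of_le hq1 with heq1 | hq1'
  · have h0 : phiF τ q = 0 := by rw [heq1]; exact hφ1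
    unfold phiF at h0; linarith
  by_contra hcon
  push_neg at hcon
  have hφq : phiF τ q < 0 := by unfold phiF; linarith
  have hq0 : 0 < q := lt_trans hm0 hqm'
  set X : ℝ := (1/2:ℝ) ^ ((2*τ-1)⁻¹ : ℝ) with hXdef
  have hX0 : 0 < X := Real.rpow_pos_of_pos one_half_pos _
  set ε : ℝ := (1/2) * min m X with hεdef
  have hmin0 : 0 < min m X := lt_min hm0 hX0
  have hε0 : 0 < ε := by rw [hεdef]; positivity
  have hhalf : (1/2) * (m ⊓ X) < m ⊓ X := by linarith
  have hεm : ε < m := by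
    have h1 : m ⊓ X ≤ m := min_le_left _ _
    rw [hεdef]; linarith
  have hεX : ε < X := by
    have h1 : m ⊓ X ≤ X := min_le_right _ _
    rw [hεdef]; linarith
  have hε1 : ε < 1 := lt_trans hεm hm1
  have hεpow : ε^(2*τ-1) < 1/2 := by
    have h2 : ε^(2*τ-1) < X^(2*τ-1) := Real.rpow_lt_rpow hε0.le hεX (by linarith)
    rwa [hXdef, ← Real.rpow_mul (by norm_num : (0:ℝ) ≤ 1/2),
      inv_mul_cancel₀ (by linarith : 2*τ-1 ≠ 0), Real.rpow_one] at h2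
  have hsqrt : (1-ε)^τ ≤ 1 - ε/2 := by
    have h1 : (1-ε)^τ ≤ (1-ε)^((2:ℝ)⁻¹) :=
      Real.rpow_le_rpow_of_exponent_ge (by linarith) (by linarith) (by
        rw [inv_eq_one_div]; linarith)
    have h2 : (1-ε)^((2:ℝ)⁻¹) ≤ 1 - ε/2 := by
      rw [show ((2:ℝ)⁻¹) = 1/2 by norm_num, ← Real.sqrt_eq_rpow]
      have h3 : Real.sqrt (1-ε) ≤ Real.sqrt ((1-ε/2)^2) :=
        Real.sqrt_le_sqrt (by nlinarith [sq_nonneg ε])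
      rwa [Real.sqrt_sq (by linarith)] at h3
    linarith
  have hφε : phiF τ ε < 0 := by
    have h1 : ε ^ (2*τ) = ε^(2*τ-1) * ε := by
      rw [← Real.rpow_add_one (ne_of_gt hε0) (2*τ-1)]
      ring_nf
    have h2 : ε^(2*τ-1) * ε < (1/2) * ε := mul_lt_mul_of_pos_right hεpow hε0
    unfold phiF
    rw [h1]
    linarith
  obtain ⟨a₁, ha₁mem, ha₁⟩ := exists_hasDerivAt_eq_slope (phiF τ) (phiD τ) hεm
    ((phiF_cont τ hτ0).mono (Set.Icc_subset_Icc hε0.le hm1.le))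
    (fun y hy => phiF_hasDeriv τ (lt_trans hε0 hy.1) (lt_trans hy.2 hm1))
  obtain ⟨a₂, ha₂mem, ha₂⟩ := exists_hasDerivAt_eq_slope (phiF τ) (phiD τ) hqm'
    ((phiF_cont τ hτ0).mono (Set.Icc_subset_Icc hm0.le hq1))
    (fun y hy => phiF_hasDeriv τ (lt_trans hm0 hy.1) (lt_of_lt_of_le hy.2 hq1))
  obtain ⟨a₃, ha₃mem, ha₃⟩ := exists_hasDerivAt_eq_slope (phiF τ) (phiD τ) hq1'
    ((phiF_cont τ hτ0).mono (Set.Icc_subset_Icc hq0.le le_rfl))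
    (fun y hy => phiF_hasDeriv τ (lt_trans hq0 hy.1) hy.2)
  have hd₁ : 0 < phiD τ a₁ := by
    rw [ha₁, hφm]
    apply div_pos (by linarith) (by linarith [ha₁mem.1, ha₁mem.2])
  have hd₂ : phiD τ a₂ < 0 := by
    rw [ha₂, hφm]
    apply div_neg_of_neg_of_pos (by linarith) (by linarith [ha₂mem.1, ha₂mem.2])
  have hd₃ : 0 < phiD τ a₃ := by
    rw [ha₃, hφ1]
    apply div_pos (by linarith) (by linarith [ha₃mem.1, ha₃mem.2])
  have ha₁01 : 0 < a₁ ∧ a₁ < 1 := ⟨lt_trans hε0 ha₁mem.1, lt_trans ha₁mem.2 hm1⟩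
  have ha₂01 : 0 < a₂ ∧ a₂ < 1 := ⟨lt_trans hm0 ha₂mem.1, lt_of_lt_of_le ha₂mem.2 hq1⟩
  have ha₃01 : 0 < a₃ ∧ a₃ < 1 := ⟨lt_trans hq0 ha₃mem.1, ha₃mem.2⟩
  have hχ₁ : 0 < chiF τ a₁ := ((phiD_sign τ hτ0 ha₁01.1 ha₁01.2).1).mp hd₁
  have hχ₂ : chiF τ a₂ < 0 := ((phiD_sign τ hτ0 ha₂01.1 ha₂01.2).2).mp hd₂
  have hχ₃ : 0 < chiF τ a₃ := ((phiD_sign τ hτ0 ha₃01.1 ha₃01.2).1).mp hd₃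
  have h12 : a₁ < a₂ := lt_trans ha₁mem.2 ha₂mem.1
  have h23 : a₂ < a₃ := lt_trans ha₂mem.2 ha₃mem.1
  rcases le_or_gt a₂ c with hcc | hcc
  · have hmono : StrictMonoOn (chiF τ) (Set.Icc a₁ a₂) := by
      apply strictMonoOn_of_deriv_pos (convex_Icc a₁ a₂)
        (chiF_cont τ ha₁01.1 ha₂01.2)
      intro y hy
      rw [interior_Icc] at hy
      have hy0 : 0 < y := lt_trans ha₁01.1 hy.1
      have hy1 : y < 1 := lt_trans hy.2 ha₂01.2
      rw [(chiF_hasDeriv τ hy0 hy1).deriv]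
      apply div_pos
      · have hyc : y < c := lt_of_lt_of_le hy.2 hcc
        have := mul_lt_mul_of_pos_left hyc hτ0
        linarith
      · exact mul_pos hy0 (by linarith)
    have := hmono (Set.left_mem_Icc.mpr h12.le) (Set.right_mem_Icc.mpr h12.le) h12
    linarith
  · have hanti : StrictAntiOn (chiF τ) (Set.Icc a₂ a₃) := by
      apply strictAntiOn_of_deriv_neg (convex_Icc a₂ a₃)
        (chiF_cont τ ha₂01.1 ha₃01.2)
      intro y hy
      rw [interior_Icc] at hy
      have hy0 : 0 < y := lt_trans ha₂01.1 hy.1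
      have hy1 : y < 1 := lt_trans hy.2 ha₃01.2
      rw [(chiF_hasDeriv τ hy0 hy1).deriv]
      apply div_neg_of_neg_of_pos
      · have hyc : c < y := lt_trans hcc hy.1
        have := mul_lt_mul_of_pos_left hyc hτ0
        linarith
      · exact mul_pos hy0 (by linarith)
    have := hanti (Set.left_mem_Icc.mpr h23.le) (Set.right_mem_Icc.mpr h23.le) h23
    linarith

/-- Summation lemma. -/
lemma sum_lemma (x : ℕ → ℝ) (P : ℕ → ℝ) :
    ∀ (N : ℕ) (F : Finset ℕ), (∀ μ ∈ F, 0 ≤ x μ) →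
      (∀ t, t < N → t + 1 ≤ (F.filter fun μ => P t ≤ x μ).card) →
      ∑ t ∈ Finset.range N, P t ≤ ∑ μ ∈ F, x μ := by
  intro N
  induction N with
  | zero => intro F hx _; simpa using Finset.sum_nonneg hx
  | succ N ih =>
    intro F hx h
    classical
    have hS := h N (Nat.lt_succ_self N)
    set S := F.filter (fun μ => P N ≤ x μ) with hSdef
    have hSne : S.Nonempty := Finset.card_pos.mp (by omega)
    obtain ⟨μ₀, hμ₀S, hmin⟩ := S.exists_min_image x hSne
    have hμ₀F : μ₀ ∈ F := (Finset.mem_filter.mp hμ₀S).1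
    have hPN : P N ≤ x μ₀ := (Finset.mem_filter.mp hμ₀S).2
    have hkey : ∀ t, t < N → t + 1 ≤ ((F.erase μ₀).filter fun μ => P t ≤ x μ).card := by
      intro t ht
      have hft : t + 1 ≤ (F.filter fun μ => P t ≤ x μ).card := h t (by omega)
      rw [Finset.filter_erase]
      by_cases hmem : μ₀ ∈ F.filter fun μ => P t ≤ x μ
      · have hcard2 : t + 2 ≤ (F.filter fun μ => P t ≤ x μ).card := by
          by_contra hcon
          have hceq : (F.filter fun μ => P t ≤ x μ).card = t + 1 := by omega
          have hnotsub : ¬ S ⊆ F.filter fun μ => P t ≤ x μ := by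
            intro hsub
            have := Finset.card_le_card hsub
            omega
          obtain ⟨ν, hνS, hνn⟩ := Finset.not_subset.mp hnotsub
          have hνF : ν ∈ F := (Finset.mem_filter.mp hνS).1
          have : ¬ P t ≤ x ν := fun hc => hνn (Finset.mem_filter.mpr ⟨hνF, hc⟩)
          have hx1 : x μ₀ ≤ x ν := hmin ν hνS
          have hx2 : P t ≤ x μ₀ := (Finset.mem_filter.mp hmem).2
          linarith
        rw [Finset.card_erase_of_mem hmem]
        omega
      · rw [Finset.erase_eq_of_notMem hmem]
        exact hft
    have hstep := ih (F.erase μ₀) (fun μ hμ => hx μ (Finset.mem_of_mem_erase hμ)) hkey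
    rw [Finset.sum_range_succ, ← Finset.sum_erase_add F x hμ₀F]
    exact add_le_add hstep hPN

/-- Trivial sumset bound. -/
lemma diag_count (A B : Finset ℕ) (hA : A.Nonempty) (hB : B.Nonempty) :
    A.card + B.card ≤ ((A ×ˢ B).image fun pr => pr.1 + pr.2).card + 1 := by
  classical
  set a0 := A.min' hA with ha0
  set b1 := B.max' hB with hb1
  set D := (A ×ˢ B).image fun pr => pr.1 + pr.2 with hD
  set X := B.image fun b => a0 + b with hX
  set Y := A.image fun a => a + b1 with hY
  have hXD : X ⊆ D := by
    intro x hx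
    obtain ⟨b, hb, rfl⟩ := Finset.mem_image.mp hx
    exact Finset.mem_image.mpr ⟨(a0, b), Finset.mem_product.mpr ⟨A.min'_mem hA, hb⟩, rfl⟩
  have hYD : Y ⊆ D := by
    intro x hx
    obtain ⟨a, ha, rfl⟩ := Finset.mem_image.mp hx
    exact Finset.mem_image.mpr ⟨(a, b1), Finset.mem_product.mpr ⟨ha, B.max'_mem hB⟩, rfl⟩
  have hXcard : X.card = B.card := Finset.card_image_of_injective _ (add_right_injective a0)
  have hYcard : Y.card = A.card := Finset.card_image_of_injective _ (add_left_injective b1)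
  have hinter : X ∩ Y ⊆ {a0 + b1} := by
    intro x hx
    obtain ⟨hx1, hx2⟩ := Finset.mem_inter.mp hx
    obtain ⟨b, hb, hxb⟩ := Finset.mem_image.mp hx1
    obtain ⟨a, ha, hxa⟩ := Finset.mem_image.mp hx2
    have h1 : a0 ≤ a := A.min'_le a ha
    have h2 : b ≤ b1 := B.le_max' b hb
    have : x = a0 + b1 := by omega
    simp [this]
  have hiu := Finset.card_union_add_card_inter X Y
  have h1 : (X ∪ Y).card ≤ D.card := Finset.card_le_card (Finset.union_subset hXD hYD)
  have h2 : (X ∩ Y).card ≤ 1 := le_trans (Finset.card_le_card hinter) (by simp)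
  omega

def Good (M : ℕ) (τ : ℝ) (U V : Fin M → ℝ) : Prop :=
  ∃ (N : ℕ) (p : ℕ → ℝ) (A B : ℕ → Finset (Fin M)),
    (∀ t, t < N → 0 ≤ p t ∧ (A t).Nonempty ∧ (B t).Nonempty ∧
      (A t).card + (B t).card = t + 2 ∧
      (∀ κ ∈ A t, 0 < U κ) ∧ (∀ l ∈ B t, 0 < V l) ∧
      (∀ κ ∈ A t, ∀ l ∈ B t, p t ≤ U κ * V l)) ∧
    (∑ κ, U κ) ^ τ * (∑ l, V l) ^ τ ≤ ∑ t ∈ Finset.range N, (p t) ^ τ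

lemma good_swap {M : ℕ} {τ : ℝ} {U V : Fin M → ℝ} (h : Good M τ U V) : Good M τ V U := by
  obtain ⟨N, p, A, B, hcond, hsum⟩ := h
  refine ⟨N, p, B, A, fun t ht => ?_, by rw [mul_comm]; exact hsum⟩
  obtain ⟨h0, hAne, hBne, hcard, hUpos, hVpos, hprod⟩ := hcond t ht
  exact ⟨h0, hBne, hAne, by omega, hVpos, hUpos,
    fun l hl κ hκ => by rw [mul_comm]; exact hprod κ hκ l hl⟩

/-- The unnormalized analytic step. -/
lemma analytic_step (M : ℕ) (hM : 2 ≤ M) (τ : ℝ) (hτ₁ : 1 / 2 < τ) (hτ₂ : τ < 1)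
    (hτ : (1 / M : ℝ) ^ (2 * τ) + ((M - 1 : ℝ) / M) ^ τ = 1)
    (A B a b : ℝ) (hA : 0 < A) (hB : 0 < B) (ha : a ≤ A) (hb : b ≤ B)
    (hmean : B ≤ M * b) (hcase : b * A ≤ a * B) :
    A ^ τ * B ^ τ ≤ (a * b) ^ τ + A ^ τ * (B - b) ^ τ := by
  have hτ0 : 0 < τ := by linarith
  have hM0 : (0:ℝ) < M := by exact_mod_cast (by omega : 0 < M)
  set q := b / B with hqdef
  set p := a / A with hpdef
  have hb0 : 0 < b := by nlinarith
  have ha0 : 0 < a := by nlinarith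
  have hq0 : 0 < q := div_pos hb0 hB
  have hp0 : 0 < p := div_pos ha0 hA
  have hqM : 1 / M ≤ q := by rw [div_le_div_iff₀ hM0 hB]; linarith
  have hq1 : q ≤ 1 := by rw [div_le_one hB]; exact hb
  have hqp : q ≤ p := by rw [div_le_div_iff₀ hB hA]; linarith
  have hphi := phi_lemma M hM τ hτ₁ hτ₂ hτ q hqM hq1
  have h1q : 0 ≤ 1 - q := by linarith
  have e1 : B * (1 - q) = B - b := by rw [hqdef]; field_simp
  have e2 : A * B * (p * q) = a * b := by rw [hqdef, hpdef]; field_simp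
  have hA' : B ^ τ * (1 - q) ^ τ = (B - b) ^ τ := by
    rw [← Real.mul_rpow hB.le h1q, e1]
  have hq2 : q ^ (2 * τ) = (q * q) ^ τ := by
    rw [Real.mul_rpow hq0.le hq0.le, ← Real.rpow_add hq0]; ring_nf
  have hle : q ^ (2 * τ) ≤ (p * q) ^ τ := by
    rw [hq2]
    exact Real.rpow_le_rpow (by positivity) (mul_le_mul_of_nonneg_right hqp hq0.le) hτ0.le
  have hmul : A ^ τ * B ^ τ * q ^ (2 * τ) ≤ A ^ τ * B ^ τ * (p * q) ^ τ :=
    mul_le_mul_of_nonneg_left hle (by positivity)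
  have hfin : A ^ τ * B ^ τ * (p * q) ^ τ = (a * b) ^ τ := by
    rw [← Real.mul_rpow hA.le hB.le, ← Real.mul_rpow (by positivity) (by positivity), e2]
  have hmain : A ^ τ * B ^ τ * 1 ≤ A ^ τ * B ^ τ * (q ^ (2 * τ) + (1 - q) ^ τ) :=
    mul_le_mul_of_nonneg_left hphi (by positivity)
  have hexp : A ^ τ * B ^ τ * (q ^ (2 * τ) + (1 - q) ^ τ)
      = A ^ τ * B ^ τ * q ^ (2 * τ) + A ^ τ * (B ^ τ * (1 - q) ^ τ) := by ring
  have hA'' : A ^ τ * (B ^ τ * (1 - q) ^ τ) = A ^ τ * (B - b) ^ τ := by rw [hA']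
  linarith [hmain, hmul, hfin, hA'', hexp]

lemma step (M : ℕ) (hM : 2 ≤ M) (τ : ℝ) (hτ₁ : 1 / 2 < τ) (hτ₂ : τ < 1)
    (hτ : (1 / M : ℝ) ^ (2 * τ) + ((M - 1 : ℝ) / M) ^ τ = 1)
    (U V : Fin M → ℝ) (hU : ∀ κ, 0 ≤ U κ) (hV : ∀ l, 0 ≤ V l)
    (hA : 0 < ∑ κ, U κ) (hB : 0 < ∑ l, V l)
    (κ₀ l₀ : Fin M) (hκ₀ : ∀ κ, U κ ≤ U κ₀) (hl₀ : ∀ l, V l ≤ V l₀)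
    (hcase : V l₀ * ∑ κ, U κ ≤ U κ₀ * ∑ l, V l)
    (hIH : Good M τ U (Function.update V l₀ 0)) : Good M τ U V := by
  classical
  have hτ0 : 0 < τ := by linarith
  have ha0 : 0 < U κ₀ := by
    by_contra hcon
    push_neg at hcon
    have hz : ∀ κ, U κ = 0 := fun κ => le_antisymm (le_trans (hκ₀ κ) hcon) (hU κ)
    rw [Finset.sum_eq_zero (fun κ _ => hz κ)] at hA
    exact lt_irrefl 0 hA
  have hb0 : 0 < V l₀ := by
    by_contra hcon
    push_neg at hcon
    have hz : ∀ l, V l = 0 := fun l => le_antisymm (le_trans (hl₀ l) hcon) (hV l)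
    rw [Finset.sum_eq_zero (fun l _ => hz l)] at hB
    exact lt_irrefl 0 hB
  obtain ⟨N, p, AF, BF, hcond, hsum⟩ := hIH
  set V' := Function.update V l₀ 0 with hV'def
  have hV'l₀ : V' l₀ = 0 := Function.update_self l₀ 0 V
  have hV'ne : ∀ l, l ≠ l₀ → V' l = V l := fun l hl => Function.update_of_ne hl 0 V
  refine ⟨N + 1, fun t => if t = 0 then U κ₀ * V l₀ else p (t - 1),
    fun t => if t = 0 then {κ₀} else AF (t - 1),
    fun t => if t = 0 then {l₀} else insert l₀ (BF (t - 1)), ?_, ?_⟩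
  · intro t ht
    cases t with
    | zero =>
      simp only [if_pos rfl, reduceIte]
      refine ⟨mul_nonneg (hU κ₀) (hV l₀), Finset.singleton_nonempty _,
        Finset.singleton_nonempty _, by simp, ?_, ?_, ?_⟩
      · intro κ hκ; rw [Finset.mem_singleton.mp hκ]; exact ha0
      · intro l hl; rw [Finset.mem_singleton.mp hl]; exact hb0
      · intro κ hκ l hl
        rw [Finset.mem_singleton.mp hκ, Finset.mem_singleton.mp hl]
    | succ s =>
      have hs : s < N := by omega
      obtain ⟨h0, hAne, hBne, hcard, hUpos, hVpos, hprod⟩ := hcond s hs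
      have hl₀notmem : l₀ ∉ BF s := by
        intro hmem
        have := hVpos l₀ hmem
        rw [hV'l₀] at this
        exact lt_irrefl 0 this
      have hBmem : ∀ l ∈ BF s, l ≠ l₀ := by
        intro l hl heq
        exact hl₀notmem (heq ▸ hl)
      simp only [Nat.succ_ne_zero, reduceIte, Nat.add_sub_cancel]
      refine ⟨h0, hAne, ⟨l₀, Finset.mem_insert_self _ _⟩, ?_, hUpos, ?_, ?_⟩
      · rw [Finset.card_insert_of_notMem hl₀notmem]; omega
      · intro l hl
        rcases Finset.mem_insert.mp hl with rfl | hl'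
        · exact hb0
        · have := hVpos l hl'
          rwa [hV'ne l (hBmem l hl')] at this
      · intro κ hκ l hl
        rcases Finset.mem_insert.mp hl with rfl | hl'
        · obtain ⟨l', hl'mem⟩ := hBne
          have h1 : p s ≤ U κ * V' l' := hprod κ hκ l' hl'mem
          have h2 : V' l' = V l' := hV'ne l' (hBmem l' hl'mem)
          have h3 : U κ * V l' ≤ U κ * V l := mul_le_mul_of_nonneg_left (hl₀ l') (hU κ)
          rw [h2] at h1
          linarith
        · have h1 : p s ≤ U κ * V' l := hprod κ hκ l hl'
          rwa [hV'ne l (hBmem l hl')] at h1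
  · have hsplit : ∑ t ∈ Finset.range (N + 1),
        (if t = 0 then U κ₀ * V l₀ else p (t - 1)) ^ τ
        = (∑ t ∈ Finset.range N, (p t) ^ τ) + (U κ₀ * V l₀) ^ τ := by
      rw [Finset.sum_range_succ']
      simp
    rw [hsplit]
    have hVsum : ∑ l, V' l = (∑ l, V l) - V l₀ := by
      rw [hV'def, Finset.sum_update_of_mem (Finset.mem_univ l₀),
        Finset.sdiff_singleton_eq_erase]
      have := Finset.sum_erase_add Finset.univ V (Finset.mem_univ l₀)
      linarith
    rw [hVsum] at hsum
    have hmean : (∑ l, V l) ≤ M * V l₀ := by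
      have h1 := Finset.sum_le_card_nsmul Finset.univ V (V l₀) (fun l _ => hl₀ l)
      rwa [Finset.card_univ, Fintype.card_fin, nsmul_eq_mul] at h1
    have hstep := analytic_step M hM τ hτ₁ hτ₂ hτ (∑ κ, U κ) (∑ l, V l)
      (U κ₀) (V l₀) hA hB
      (Finset.single_le_sum (fun κ _ => hU κ) (Finset.mem_univ κ₀))
      (Finset.single_le_sum (fun l _ => hV l) (Finset.mem_univ l₀))
      hmean hcase
    linarith

lemma key (M : ℕ) (hM : 2 ≤ M) (τ : ℝ) (hτ₁ : 1 / 2 < τ) (hτ₂ : τ < 1)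
    (hτ : (1 / M : ℝ) ^ (2 * τ) + ((M - 1 : ℝ) / M) ^ τ = 1) :
    ∀ (n : ℕ) (U V : Fin M → ℝ), (∀ κ, 0 ≤ U κ) → (∀ l, 0 ≤ V l) →
      (Finset.univ.filter fun κ => U κ ≠ 0).card
        + (Finset.univ.filter fun l => V l ≠ 0).card ≤ n →
      Good M τ U V := by
  classical
  have hτ0 : 0 < τ := by linarith
  have hτne : τ ≠ 0 := ne_of_gt hτ0
  have hFinNe : Nonempty (Fin M) := ⟨⟨0, by omega⟩⟩
  intro n
  induction n with
  | zero =>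
    intro U V hU hV hn
    have hUzero : ∑ κ, U κ = 0 := by
      apply Finset.sum_eq_zero
      intro κ _
      by_contra hne
      have : κ ∈ Finset.univ.filter fun κ => U κ ≠ 0 := Finset.mem_filter.mpr ⟨Finset.mem_univ κ, hne⟩
      have := Finset.card_pos.mpr ⟨κ, this⟩
      omega
    refine ⟨0, fun _ => 0, fun _ => ∅, fun _ => ∅, fun t ht => by omega, ?_⟩
    rw [hUzero, Real.zero_rpow hτne, zero_mul]
    simp
  | succ n ih =>
    intro U V hU hV hn
    by_cases hA : ∑ κ, U κ = 0
    · refine ⟨0, fun _ => 0, fun _ => ∅, fun _ => ∅, fun t ht => by omega, ?_⟩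
      rw [hA, Real.zero_rpow hτne, zero_mul]
      simp
    by_cases hB : ∑ l, V l = 0
    · refine ⟨0, fun _ => 0, fun _ => ∅, fun _ => ∅, fun t ht => by omega, ?_⟩
      rw [hB, Real.zero_rpow hτne, mul_zero]
      simp
    have hA' : 0 < ∑ κ, U κ :=
      lt_of_le_of_ne (Finset.sum_nonneg fun κ _ => hU κ) (Ne.symm hA)
    have hB' : 0 < ∑ l, V l :=
      lt_of_le_of_ne (Finset.sum_nonneg fun l _ => hV l) (Ne.symm hB)
    obtain ⟨κ₀, -, hκ₀⟩ := Finset.exists_max_image Finset.univ U Finset.univ_nonempty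
    obtain ⟨l₀, -, hl₀⟩ := Finset.exists_max_image Finset.univ V Finset.univ_nonempty
    have hκ₀' : ∀ κ, U κ ≤ U κ₀ := fun κ => hκ₀ κ (Finset.mem_univ κ)
    have hl₀' : ∀ l, V l ≤ V l₀ := fun l => hl₀ l (Finset.mem_univ l)
    have ha0 : 0 < U κ₀ := by
      by_contra hcon
      push_neg at hcon
      exact hA (Finset.sum_eq_zero fun κ _ => le_antisymm (le_trans (hκ₀' κ) hcon) (hU κ))
    have hb0 : 0 < V l₀ := by
      by_contra hcon
      push_neg at hcon
      exact hB (Finset.sum_eq_zero fun l _ => le_antisymm (le_trans (hl₀' l) hcon) (hV l))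
    have hupdU : ∀ κ, 0 ≤ Function.update U κ₀ 0 κ := by
      intro κ
      rcases eq_or_ne κ κ₀ with rfl | hne
      · rw [Function.update_self]
      · rw [Function.update_of_ne hne]; exact hU κ
    have hupdV : ∀ l, 0 ≤ Function.update V l₀ 0 l := by
      intro l
      rcases eq_or_ne l l₀ with rfl | hne
      · rw [Function.update_self]
      · rw [Function.update_of_ne hne]; exact hV l
    have hsuppU : (Finset.univ.filter fun κ => Function.update U κ₀ 0 κ ≠ 0)
        = (Finset.univ.filter fun κ => U κ ≠ 0).erase κ₀ := by
      ext κ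
      simp only [Finset.mem_filter, Finset.mem_erase, Finset.mem_univ, true_and]
      rcases eq_or_ne κ κ₀ with rfl | hne
      · simp [Function.update_self]
      · simp [Function.update_of_ne hne, hne]
    have hsuppV : (Finset.univ.filter fun l => Function.update V l₀ 0 l ≠ 0)
        = (Finset.univ.filter fun l => V l ≠ 0).erase l₀ := by
      ext l
      simp only [Finset.mem_filter, Finset.mem_erase, Finset.mem_univ, true_and]
      rcases eq_or_ne l l₀ with rfl | hne
      · simp [Function.update_self]
      · simp [Function.update_of_ne hne, hne]
    have hκ₀mem : κ₀ ∈ Finset.univ.filter fun κ => U κ ≠ 0 :=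
      Finset.mem_filter.mpr ⟨Finset.mem_univ κ₀, ne_of_gt ha0⟩
    have hl₀mem : l₀ ∈ Finset.univ.filter fun l => V l ≠ 0 :=
      Finset.mem_filter.mpr ⟨Finset.mem_univ l₀, ne_of_gt hb0⟩
    rcases le_total (V l₀ * ∑ κ, U κ) (U κ₀ * ∑ l, V l) with hc | hc
    · apply step M hM τ hτ₁ hτ₂ hτ U V hU hV hA' hB' κ₀ l₀ hκ₀' hl₀' hc
      apply ih U (Function.update V l₀ 0) hU hupdV
      rw [hsuppV, Finset.card_erase_of_mem hl₀mem]
      have := Finset.card_pos.mpr ⟨l₀, hl₀mem⟩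
      omega
    · apply good_swap
      apply step M hM τ hτ₁ hτ₂ hτ V U hV hU hB' hA' l₀ κ₀ hl₀' hκ₀' hc
      apply good_swap
      apply ih (Function.update U κ₀ 0) V hupdU hV
      rw [hsuppU, Finset.card_erase_of_mem hκ₀mem]
      have := Finset.card_pos.mpr ⟨κ₀, hκ₀mem⟩
      omega

open Finset in
theorem stmt9 (M : ℕ) (hM : 2 ≤ M) (τ : ℝ) (hτ₁ : 1 / 2 < τ) (hτ₂ : τ < 1)
    (hτ : (1 / M : ℝ) ^ (2 * τ) + ((M - 1 : ℝ) / M) ^ τ = 1)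
    (U V : Fin M → ℝ) (hU : ∀ κ, 0 ≤ U κ) (hV : ∀ l, 0 ≤ V l) :
    (∑ κ, U κ) ^ τ * (∑ l, V l) ^ τ ≤
      ∑ μ ∈ Finset.range (2 * M - 1),
        sSup {t : ℝ | ∃ κ l : Fin M, (κ : ℕ) + (l : ℕ) = μ ∧ t = (U κ * V l) ^ τ} := by
  classical
  have hτ0 : 0 < τ := by linarith
  set x : ℕ → ℝ := fun μ =>
    sSup {t : ℝ | ∃ κ l : Fin M, (κ : ℕ) + (l : ℕ) = μ ∧ t = (U κ * V l) ^ τ} with hxdef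
  have hfin : ∀ μ, {t : ℝ | ∃ κ l : Fin M, (κ : ℕ) + (l : ℕ) = μ ∧ t = (U κ * V l) ^ τ}.Finite := by
    intro μ
    apply Set.Finite.subset (Set.finite_range fun pr : Fin M × Fin M => (U pr.1 * V pr.2) ^ τ)
    rintro t ⟨κ, l, -, rfl⟩
    exact ⟨(κ, l), rfl⟩
  have hle : ∀ (μ : ℕ) (κ l : Fin M), (κ : ℕ) + (l : ℕ) = μ → (U κ * V l) ^ τ ≤ x μ := by
    intro μ κ l hs
    exact le_csSup ((hfin μ).bddAbove) ⟨κ, l, hs, rfl⟩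
  have hxnn : ∀ μ ∈ Finset.range (2 * M - 1), 0 ≤ x μ := by
    intro μ hμ
    rw [Finset.mem_range] at hμ
    have hk1 : min μ (M - 1) < M := by omega
    have hk2 : μ - min μ (M - 1) < M := by omega
    refine le_trans (Real.rpow_nonneg (mul_nonneg (hU ⟨min μ (M-1), hk1⟩) (hV ⟨μ - min μ (M-1), hk2⟩)) τ) (hle μ _ _ ?_)
    simp only [Fin.val_mk]
    omega
  obtain ⟨N, p, A, B, hcond, hsum⟩ := key M hM τ hτ₁ hτ₂ hτ
    ((Finset.univ.filter fun κ => U κ ≠ 0).card + (Finset.univ.filter fun l => V l ≠ 0).card)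
    U V hU hV le_rfl
  refine le_trans hsum ?_
  apply sum_lemma x (fun t => (p t) ^ τ) N (Finset.range (2 * M - 1)) hxnn
  intro t ht
  obtain ⟨h0, hAne, hBne, hcard, -, -, hprod⟩ := hcond t ht
  have hA'ne : ((A t).image Fin.val).Nonempty := hAne.image _
  have hB'ne : ((B t).image Fin.val).Nonempty := hBne.image _
  have hA'card : ((A t).image Fin.val).card = (A t).card :=
    Finset.card_image_of_injective _ Fin.val_injective
  have hB'card : ((B t).image Fin.val).card = (B t).card :=
    Finset.card_image_of_injective _ Fin.val_injective
  have hcount := diag_count _ _ hA'ne hB'ne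
  have hDsub : (((A t).image Fin.val ×ˢ (B t).image Fin.val).image fun pr => pr.1 + pr.2)
      ⊆ (Finset.range (2 * M - 1)).filter fun μ => (p t) ^ τ ≤ x μ := by
    intro μ hμ
    obtain ⟨⟨av, bv⟩, hmem, rfl⟩ := Finset.mem_image.mp hμ
    obtain ⟨hav, hbv⟩ := Finset.mem_product.mp hmem
    obtain ⟨κ, hκ, rfl⟩ := Finset.mem_image.mp hav
    obtain ⟨l, hl, rfl⟩ := Finset.mem_image.mp hbv
    refine Finset.mem_filter.mpr ⟨Finset.mem_range.mpr ?_, ?_⟩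
    · have h1 := κ.isLt
      have h2 := l.isLt
      omega
    · exact le_trans (Real.rpow_le_rpow h0 (hprod κ hκ l hl) hτ0.le) (hle _ κ l rfl)
  have hcard2 := Finset.card_le_card hDsub
  omega
end

section
/- Let M ≥ 2 and let τ ∈ (1/2, 1) satisfy (1/M)^{2τ} + ((M−1)/M)^τ = 1. Define f(x) = x^{2τ} + (1−x)^τ − 1 on [0,1]. Then f(x) ≥ 0 for all x ∈ [1/M, 1]. -/
/-!
Write `a = 1/M` and `f = powGap τ`. It vanishes at `0`, `a` and `1`, and its third derivative is negative
on `(0, 1)`, so `f''` is injective there and, by Rolle's theorem applied twice, `f` has no further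
zero in `[0, 1]`. If `f` were negative somewhere in `(a, 1)`, then, since `f > 0` just below `1`
(there `(1 - x)^τ` dominates the linear decay of `x^(2τ)`), the intermediate value theorem would
produce a fourth zero.
-/

open Set Filter Topology

lemma exists_hasDerivAt_eq_zero_of_Icc_subset {f f' : ℝ → ℝ} {a b s t : ℝ}
    (hf : ContinuousOn f (Icc a b)) (hf' : ∀ x ∈ Ioo a b, HasDerivAt f (f' x) x)
    (has : a ≤ s) (hst : s < t) (htb : t ≤ b) (hfst : f s = f t) :
    ∃ c ∈ Ioo s t, f' c = 0 :=
  exists_hasDerivAt_eq_zero hst (hf.mono (Icc_subset_Icc has htb)) hfst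
    fun x hx => hf' x ⟨has.trans_lt hx.1, hx.2.trans_le htb⟩

lemma not_four_zeros_of_injOn_deriv2 {f f' f'' : ℝ → ℝ} {a b : ℝ}
    (hf : ContinuousOn f (Icc a b)) (hf' : ∀ x ∈ Ioo a b, HasDerivAt f (f' x) x)
    (hf'' : ∀ x ∈ Ioo a b, HasDerivAt f' (f'' x) x) (hinj : InjOn f'' (Ioo a b))
    {x₀ x₁ x₂ x₃ : ℝ} (ha : a ≤ x₀) (h₀₁ : x₀ < x₁) (h₁₂ : x₁ < x₂) (h₂₃ : x₂ < x₃) (hb : x₃ ≤ b)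
    (hx₀ : f x₀ = 0) (hx₁ : f x₁ = 0) (hx₂ : f x₂ = 0) (hx₃ : f x₃ = 0) : False := by
  obtain ⟨c₁, hc₁, hf'c₁⟩ := exists_hasDerivAt_eq_zero_of_Icc_subset hf hf' ha h₀₁
    (by linarith) (hx₀.trans hx₁.symm)
  obtain ⟨c₂, hc₂, hf'c₂⟩ := exists_hasDerivAt_eq_zero_of_Icc_subset hf hf' (by linarith) h₁₂
    (by linarith) (hx₁.trans hx₂.symm)
  obtain ⟨c₃, hc₃, hf'c₃⟩ := exists_hasDerivAt_eq_zero_of_Icc_subset hf hf' (by linarith) h₂₃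
    hb (hx₂.trans hx₃.symm)
  have hsub : Icc c₁ c₃ ⊆ Ioo a b := Icc_subset_Ioo (by linarith [hc₁.1]) (by linarith [hc₃.2])
  have hf'_cont : ContinuousOn f' (Icc c₁ c₃) := fun x hx =>
    (hf'' x (hsub hx)).continuousAt.continuousWithinAt
  have hf''_sub : ∀ x ∈ Ioo c₁ c₃, HasDerivAt f' (f'' x) x := fun x hx =>
    hf'' x (hsub (Ioo_subset_Icc_self hx))
  obtain ⟨d₁, hd₁, hf''d₁⟩ := exists_hasDerivAt_eq_zero_of_Icc_subset hf'_cont hf''_sub le_rfl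
    (hc₁.2.trans hc₂.1) (by linarith [hc₂.2, hc₃.1]) (hf'c₁.trans hf'c₂.symm)
  obtain ⟨d₂, hd₂, hf''d₂⟩ := exists_hasDerivAt_eq_zero_of_Icc_subset hf'_cont hf''_sub
    (by linarith [hc₁.2, hc₂.1]) (hc₂.2.trans hc₃.1) le_rfl (hf'c₂.trans hf'c₃.symm)
  have hd₁₂ : d₁ = d₂ := hinj
    (hsub ⟨hd₁.1.le, (hd₁.2.trans (hc₂.2.trans hc₃.1)).le⟩)
    (hsub ⟨((hc₁.2.trans hc₂.1).trans hd₂.1).le, hd₂.2.le⟩) (hf''d₁.trans hf''d₂.symm)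
  linarith [hd₁.2, hd₂.1]

lemma exists_mem_Ioo_mul_lt_rpow {τ : ℝ} (hτ : τ < 1) (c : ℝ) {ε : ℝ} (hε : 0 < ε) :
    ∃ b ∈ Ioo 0 ε, c * b < b ^ τ := by
  have hlarge : ∀ᶠ b in 𝓝[>] (0 : ℝ), c < b ^ (τ - 1) :=
    (tendsto_rpow_neg_nhdsGT_zero (by linarith)).eventually_gt_atTop c
  obtain ⟨b, hcb, hb⟩ := (hlarge.and (Ioo_mem_nhdsGT hε)).exists
  refine ⟨b, hb, ?_⟩
  calc c * b < b ^ (τ - 1) * b := mul_lt_mul_of_pos_right hcb hb.1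
    _ = b ^ τ := by rw [Real.rpow_sub_one hb.1.ne', div_mul_cancel₀ _ hb.1.ne']

noncomputable def powGap (τ x : ℝ) : ℝ := x ^ (2 * τ) + (1 - x) ^ τ - 1

noncomputable def powGapDeriv (τ x : ℝ) : ℝ := 2 * τ * x ^ (2 * τ - 1) - τ * (1 - x) ^ (τ - 1)

noncomputable def powGapDeriv2 (τ x : ℝ) : ℝ :=
  2 * τ * (2 * τ - 1) * x ^ (2 * τ - 2) + τ * (τ - 1) * (1 - x) ^ (τ - 2)

section powGap

variable {τ : ℝ}

lemma powGap_zero (hτ : 0 < τ) : powGap τ 0 = 0 := by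
  simp [powGap, Real.zero_rpow (by positivity : 2 * τ ≠ 0)]

lemma powGap_one (hτ : 0 < τ) : powGap τ 1 = 0 := by
  simp [powGap, Real.zero_rpow hτ.ne']

lemma continuous_powGap (hτ : 0 < τ) : Continuous (powGap τ) := by
  unfold powGap
  have hτ' : 0 ≤ τ := hτ.le
  have h2τ : 0 ≤ 2 * τ := by positivity
  fun_prop (disch := assumption)

lemma hasDerivAt_powGap {x : ℝ} (hx : x ∈ Ioo 0 1) :
    HasDerivAt (powGap τ) (powGapDeriv τ x) x := by
  have hpow := Real.hasDerivAt_rpow_const (p := 2 * τ) (Or.inl hx.1.ne')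
  have hpow' := ((hasDerivAt_id' x).const_sub 1).rpow_const (p := τ) (Or.inl (sub_ne_zero.2 hx.2.ne'))
  exact ((hpow.add hpow').sub_const 1).congr_deriv (by rw [powGapDeriv]; ring)

lemma hasDerivAt_powGapDeriv {x : ℝ} (hx : x ∈ Ioo 0 1) :
    HasDerivAt (powGapDeriv τ) (powGapDeriv2 τ x) x := by
  have hpow := Real.hasDerivAt_rpow_const (p := 2 * τ - 1) (Or.inl hx.1.ne')
  have hpow' := ((hasDerivAt_id' x).const_sub 1).rpow_const (p := τ - 1) (Or.inl (sub_ne_zero.2 hx.2.ne'))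
  exact ((hpow.const_mul (2 * τ)).sub (hpow'.const_mul τ)).congr_deriv (by
    rw [powGapDeriv2]; ring_nf)

lemma strictAntiOn_powGapDeriv2 (hτ₁ : 1 / 2 < τ) (hτ₂ : τ < 1) :
    StrictAntiOn (powGapDeriv2 τ) (Ioo 0 1) := by
  intro x hx y hy hxy
  have hA : 0 < 2 * τ * (2 * τ - 1) := by nlinarith
  have hB : τ * (τ - 1) < 0 := by nlinarith
  have h₁ : y ^ (2 * τ - 2) < x ^ (2 * τ - 2) := Real.rpow_lt_rpow_of_neg hx.1 hxy (by linarith)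
  have h₂ : (1 - x) ^ (τ - 2) < (1 - y) ^ (τ - 2) :=
    Real.rpow_lt_rpow_of_neg (by linarith [hy.2]) (by linarith) (by linarith)
  have := mul_lt_mul_of_pos_left h₁ hA
  have := mul_lt_mul_of_neg_left h₂ hB
  simp only [powGapDeriv2]
  linarith

lemma exists_powGap_pos (hτ₁ : 1 / 2 ≤ τ) (hτ₂ : τ < 1) {x : ℝ} (hx₀ : 0 ≤ x) (hx : x < 1) :
    ∃ y ∈ Ioo x 1, 0 < powGap τ y := by
  obtain ⟨b, hb, hbτ⟩ := exists_mem_Ioo_mul_lt_rpow hτ₂ (2 * τ) (sub_pos.2 hx)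
  have hbernoulli : 1 + 2 * τ * -b ≤ (1 + -b) ^ (2 * τ) :=
    one_add_mul_self_le_rpow_one_add (by linarith [hb.2]) (by linarith)
  refine ⟨1 - b, ⟨by linarith [hb.2], by linarith [hb.1]⟩, ?_⟩
  simp only [powGap, sub_sub_cancel, ← sub_eq_add_neg] at hbernoulli ⊢
  linarith

end powGap

theorem stmt10 (M : ℕ) (hM : 2 ≤ M) (τ : ℝ) (hτ₁ : 1 / 2 < τ) (hτ₂ : τ < 1)
    (hτ : (1 / M : ℝ) ^ (2 * τ) + ((M - 1 : ℝ) / M) ^ τ = 1) :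
    ∀ x : ℝ, 1 / M ≤ x → x ≤ 1 → 0 ≤ x ^ (2 * τ) + (1 - x) ^ τ - 1 := by
  intro x hax hx1
  have hτ0 : 0 < τ := by linarith
  have hM2 : (2 : ℝ) ≤ M := by exact_mod_cast hM
  have ha0 : (0 : ℝ) < 1 / M := by positivity
  have hFa : powGap τ (1 / M) = 0 := by
    rw [powGap, one_sub_div (by positivity), hτ, sub_self]
  show 0 ≤ powGap τ x
  by_contra! hFx
  have hax' : 1 / M < x := hax.lt_of_ne (by rintro rfl; linarith)
  have hx1' : x < 1 := hx1.lt_of_ne (by rintro rfl; linarith [powGap_one hτ0])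
  obtain ⟨y, hy, hFy⟩ := exists_powGap_pos hτ₁.le hτ₂ (ha0.trans hax').le hx1'
  obtain ⟨z, hz, hFz⟩ := intermediate_value_Ioo hy.1.le (continuous_powGap hτ0).continuousOn
    (show (0 : ℝ) ∈ Ioo (powGap τ x) (powGap τ y) from ⟨hFx, hFy⟩)
  exact not_four_zeros_of_injOn_deriv2 (continuous_powGap hτ0).continuousOn
    (fun _ => hasDerivAt_powGap) (fun _ => hasDerivAt_powGapDeriv)
    (strictAntiOn_powGapDeriv2 hτ₁ hτ₂).injOn le_rfl ha0 (hax'.trans hz.1) (hz.2.trans hy.2)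
    le_rfl (powGap_zero hτ0) hFa hFz (powGap_one hτ0)
end

section
/- Let p be prime and let θ ∈ 𝔽_p, θ ≠ 0, and B₁, B₂ ⊆ 𝔽_p. Then |∑_{b₁∈B₁} ∑_{b₂∈B₂} e_p(θ(b₁−b₂)²)| ≤ |B₁|^{1/2} E(B₁,B₁)^{1/8} |B₂|^{1/2} E(B₂,B₂)^{1/8} p^{1/8}, where e_p(x) = e^{2πix/p} and E(B,B) is the number of quadruples (b,b',c,c') ∈ B⁴ with b + b' = c + c'. -/
open Finset

private lemma expand4 {α : Type*} (B : Finset α) (f g h k : α → ℂ) :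
    (∑ a ∈ B, f a) * ((∑ b ∈ B, g b) * ((∑ c ∈ B, h c) * (∑ d ∈ B, k d)))
    = ∑ a ∈ B, ∑ b ∈ B, ∑ c ∈ B, ∑ d ∈ B, f a * (g b * (h c * k d)) := by
  rw [Finset.sum_mul]
  refine Finset.sum_congr rfl fun a _ => ?_
  rw [Finset.sum_mul, Finset.mul_sum]
  refine Finset.sum_congr rfl fun b _ => ?_
  rw [Finset.sum_mul, Finset.mul_sum, Finset.mul_sum]
  refine Finset.sum_congr rfl fun c _ => ?_
  rw [Finset.mul_sum, Finset.mul_sum, Finset.mul_sum]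

private lemma rpow_combine (a b c d e : ℝ) (ha : 0 ≤ a) (hb : 0 ≤ b) (hc : 0 ≤ c)
    (hd : 0 ≤ d) (he : 0 ≤ e) :
    (a ^ (4 : ℕ) * b ^ (4 : ℕ) * (c * (d * e))) ^ ((1 : ℝ) / 8)
      = a ^ ((1 : ℝ) / 2) * e ^ ((1 : ℝ) / 8) * b ^ ((1 : ℝ) / 2) * c ^ ((1 : ℝ) / 8)
        * d ^ ((1 : ℝ) / 8) := by
  have e4 : ∀ x : ℝ, 0 ≤ x → (x ^ (4 : ℕ)) ^ ((1 : ℝ) / 8) = x ^ ((1 : ℝ) / 2) := by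
    intro x hx
    rw [← Real.rpow_natCast x 4, ← Real.rpow_mul hx]
    norm_num
  rw [Real.mul_rpow (by positivity) (by positivity),
      Real.mul_rpow (by positivity) (by positivity),
      Real.mul_rpow (by positivity) (by positivity),
      Real.mul_rpow (by positivity) (by positivity),
      e4 a ha, e4 b hb]
  ring

section charlemmas
set_option linter.unusedSectionVars false

variable {p : ℕ} [NeZero p] (hp : p.Prime) (ep : ZMod p → ℂ)
  (hep : ∀ x : ZMod p, ep x = Complex.exp (2 * Real.pi * Complex.I * (x.val : ℂ) / p))

include hp hep

private lemma ep_pow : ∀ x : ZMod p, ep x = Complex.exp (2 * Real.pi * Complex.I / p) ^ (x.val) := by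
  intro x
  rw [hep, ← Complex.exp_nat_mul]
  ring_nf

private lemma zeta_pow_p : Complex.exp (2 * Real.pi * Complex.I / p) ^ p = 1 := by
  rw [← Complex.exp_nat_mul]
  have hp0 : (p : ℂ) ≠ 0 := Nat.cast_ne_zero.mpr hp.pos.ne'
  rw [show (p : ℂ) * (2 * Real.pi * Complex.I / p) = 2 * Real.pi * Complex.I by
    field_simp]
  exact Complex.exp_two_pi_mul_I

private lemma ep_add : ∀ x y : ZMod p, ep (x + y) = ep x * ep y := by
  intro x y
  rw [ep_pow hp ep hep, ep_pow hp ep hep, ep_pow hp ep hep, ZMod.val_add,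
    ← pow_eq_pow_mod _ (zeta_pow_p hp ep hep), pow_add]

private lemma ep_zero : ep 0 = 1 := by
  rw [hep]; simp

private lemma norm_ep : ∀ x : ZMod p, ‖ep x‖ = 1 := by
  intro x
  rw [hep]
  rw [show 2 * Real.pi * Complex.I * (x.val : ℂ) / p = ((2 * Real.pi * x.val / p : ℝ) : ℂ) * Complex.I by
    push_cast; ring]
  exact Complex.norm_exp_ofReal_mul_I _

private lemma conj_ep : ∀ x : ZMod p, (starRingEnd ℂ) (ep x) = ep (-x) := by
  intro x
  have h1 : ep x * ep (-x) = 1 := by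
    rw [← ep_add hp ep hep]; simp [ep_zero hp ep hep]
  have h2 : ep x * (starRingEnd ℂ) (ep x) = 1 := by
    rw [Complex.mul_conj', norm_ep hp ep hep]; norm_num
  have hne : ep x ≠ 0 := by
    intro h; rw [h] at h1; simp at h1
  exact mul_left_cancel₀ hne (h2.trans h1.symm)

private lemma zeta_ne_one : Complex.exp (2 * Real.pi * Complex.I / p) ≠ 1 := by
  intro h
  rw [Complex.exp_eq_one_iff] at h
  obtain ⟨n, hn⟩ := h
  have hp0 : (p : ℂ) ≠ 0 := Nat.cast_ne_zero.mpr hp.pos.ne'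
  have h2 : (2 * (Real.pi : ℂ) * Complex.I) ≠ 0 :=
    mul_ne_zero (mul_ne_zero two_ne_zero (Complex.ofReal_ne_zero.mpr Real.pi_ne_zero))
      Complex.I_ne_zero
  rw [div_eq_iff hp0] at hn
  have key : (1 : ℂ) * (2 * Real.pi * Complex.I) = ((n * p : ℤ) : ℂ) * (2 * Real.pi * Complex.I) := by
    push_cast
    linear_combination hn
  have h1 : (1 : ℂ) = ((n * p : ℤ) : ℂ) := mul_right_cancel₀ h2 key
  have h1' : (1 : ℤ) = n * p := by exact_mod_cast h1
  have hd : (p : ℤ) ∣ 1 := ⟨n, by rw [h1']; ring⟩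
  have h3 := Int.le_of_dvd one_pos hd
  have := hp.two_le
  omega

private lemma sum_ep_all : ∑ b : ZMod p, ep b = 0 := by
  have h1 : ∑ b : ZMod p, ep b = ∑ i ∈ Finset.range p, Complex.exp (2 * Real.pi * Complex.I / p) ^ i := by
    rw [Finset.sum_congr rfl (fun b _ => ep_pow hp ep hep b)]
    refine Finset.sum_nbij' (fun b => b.val) (fun i => (i : ZMod p)) ?_ ?_ ?_ ?_ ?_
    · intro a _; exact Finset.mem_range.mpr (ZMod.val_lt a)
    · intro a _; exact Finset.mem_univ _
    · intro a _; exact ZMod.natCast_zmod_val a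
    · intro a ha; exact ZMod.val_cast_of_lt (Finset.mem_range.mp ha)
    · intro a _; rfl
  rw [h1, geom_sum_eq (zeta_ne_one hp ep hep), zeta_pow_p hp ep hep]
  simp

private lemma sum_ep_univ : ∀ t : ZMod p, ∑ b : ZMod p, ep (t * b) = if t = 0 then (p : ℂ) else 0 := by
  haveI := Fact.mk hp
  intro t
  by_cases ht : t = 0
  · simp [ht, ep_zero hp ep hep, Finset.card_univ, ZMod.card]
  · rw [if_neg ht]
    rw [Fintype.sum_bijective _ (mulLeft_bijective₀ t ht) _ (fun b => ep b) (fun x => rfl)]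
    exact sum_ep_all hp ep hep

private lemma parseval (B : Finset (ZMod p)) :
    ∑ u : ZMod p, ‖∑ b ∈ B, ep (u * b)‖ ^ 4
      = p * ((((B ×ˢ B) ×ˢ (B ×ˢ B)).filter
          (fun q => q.1.1 + q.1.2 = q.2.1 + q.2.2)).card : ℝ) := by
  have hcomplex : ((∑ u : ZMod p, ‖∑ b ∈ B, ep (u * b)‖ ^ 4 : ℝ) : ℂ)
      = (p : ℂ) * ((((B ×ˢ B) ×ˢ (B ×ˢ B)).filter
          (fun q => q.1.1 + q.1.2 = q.2.1 + q.2.2)).card : ℂ) := by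
    have step1 : ∀ u : ZMod p, ((‖∑ b ∈ B, ep (u * b)‖ ^ 4 : ℝ) : ℂ)
        = ∑ a ∈ B, ∑ b ∈ B, ∑ c ∈ B, ∑ d ∈ B, ep ((a + b - c - d) * u) := by
      intro u
      have hconj : (starRingEnd ℂ) (∑ b ∈ B, ep (u * b)) = ∑ c ∈ B, ep (-(u * c)) := by
        rw [map_sum]
        exact Finset.sum_congr rfl fun c _ => conj_ep hp ep hep _
      calc ((‖∑ b ∈ B, ep (u * b)‖ ^ 4 : ℝ) : ℂ)
          = ((∑ a ∈ B, ep (u * a)) * (starRingEnd ℂ) (∑ b ∈ B, ep (u * b))) ^ 2 := by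
            rw [Complex.mul_conj']; push_cast; ring
        _ = (∑ a ∈ B, ep (u * a)) * ((∑ b ∈ B, ep (u * b)) *
              ((∑ c ∈ B, ep (-(u * c))) * (∑ d ∈ B, ep (-(u * d))))) := by
            rw [hconj]; ring
        _ = ∑ a ∈ B, ∑ b ∈ B, ∑ c ∈ B, ∑ d ∈ B,
              ep (u * a) * (ep (u * b) * (ep (-(u * c)) * ep (-(u * d)))) := by
            exact expand4 B _ _ _ _
        _ = ∑ a ∈ B, ∑ b ∈ B, ∑ c ∈ B, ∑ d ∈ B, ep ((a + b - c - d) * u) := by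
            refine Finset.sum_congr rfl fun a _ => Finset.sum_congr rfl fun b _ =>
              Finset.sum_congr rfl fun c _ => Finset.sum_congr rfl fun d _ => ?_
            rw [← ep_add hp ep hep, ← ep_add hp ep hep, ← ep_add hp ep hep]
            congr 1
            ring
    push_cast
    calc (∑ u : ZMod p, (‖∑ b ∈ B, ep (u * b)‖ : ℂ) ^ 4)
        = ∑ u : ZMod p, ∑ a ∈ B, ∑ b ∈ B, ∑ c ∈ B, ∑ d ∈ B, ep ((a + b - c - d) * u) := by
          refine Finset.sum_congr rfl fun u _ => ?_
          rw [← step1 u]; push_cast; ring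
      _ = ∑ a ∈ B, ∑ b ∈ B, ∑ c ∈ B, ∑ d ∈ B, ∑ u : ZMod p, ep ((a + b - c - d) * u) := by
          rw [Finset.sum_comm]
          refine Finset.sum_congr rfl fun a _ => ?_
          rw [Finset.sum_comm]
          refine Finset.sum_congr rfl fun b _ => ?_
          rw [Finset.sum_comm]
          refine Finset.sum_congr rfl fun c _ => ?_
          rw [Finset.sum_comm]
      _ = ∑ a ∈ B, ∑ b ∈ B, ∑ c ∈ B, ∑ d ∈ B, ((p : ℂ) * if a + b = c + d then 1 else 0) := by
          refine Finset.sum_congr rfl fun a _ => Finset.sum_congr rfl fun b _ =>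
            Finset.sum_congr rfl fun c _ => Finset.sum_congr rfl fun d _ => ?_
          rw [sum_ep_univ hp ep hep]
          by_cases h : a + b = c + d
          · rw [if_pos (show a + b - c - d = 0 by linear_combination h), if_pos h, mul_one]
          · rw [if_neg (show ¬(a + b - c - d = 0) from fun hc => h (by linear_combination hc)),
              if_neg h, mul_zero]
      _ = (p : ℂ) * ((((B ×ˢ B) ×ˢ (B ×ˢ B)).filter
            (fun q => q.1.1 + q.1.2 = q.2.1 + q.2.2)).card : ℂ) := by
          simp_rw [← Finset.mul_sum]
          congr 1
          rw [Finset.card_filter]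
          push_cast
          rw [Finset.sum_product, Finset.sum_product]
          simp_rw [Finset.sum_product]
  exact_mod_cast hcomplex

end charlemmas

section comb
variable {p : ℕ} [NeZero p]

private lemma sum_r_card (B : Finset (ZMod p)) :
    ∑ t : ZMod p, (((B ×ˢ B).filter (fun q => q.2 - q.1 = t)).card) = B.card ^ 2 := by
  rw [← Finset.card_eq_sum_card_fiberwise (f := fun q : ZMod p × ZMod p => q.2 - q.1)
    (t := Finset.univ) (fun q _ => Finset.mem_univ _), Finset.card_product]
  ring

private lemma sum_rsq (B : Finset (ZMod p)) :
    ∑ t : ZMod p, (((B ×ˢ B).filter (fun q => q.2 - q.1 = t)).card) ^ 2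
      = (((B ×ˢ B) ×ˢ (B ×ˢ B)).filter
          (fun q => q.1.1 + q.1.2 = q.2.1 + q.2.2)).card := by
  classical
  have h1 : ∀ t : ZMod p,
      (((B ×ˢ B).filter (fun q => q.2 - q.1 = t)).card) ^ 2
        = ((((B ×ˢ B) ×ˢ (B ×ˢ B)).filter
            (fun q => q.1.2 - q.1.1 = t ∧ q.2.2 - q.2.1 = t)).card) := by
    intro t
    rw [Finset.filter_product (fun x : ZMod p × ZMod p => x.2 - x.1 = t)
        (fun x : ZMod p × ZMod p => x.2 - x.1 = t), Finset.card_product]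
    ring
  simp_rw [h1]
  have h2 : ∑ t : ZMod p, ((((B ×ˢ B) ×ˢ (B ×ˢ B)).filter
      (fun q => q.1.2 - q.1.1 = t ∧ q.2.2 - q.2.1 = t)).card)
      = (((B ×ˢ B) ×ˢ (B ×ˢ B)).filter
          (fun q => q.1.2 - q.1.1 = q.2.2 - q.2.1)).card := by
    rw [Finset.card_eq_sum_card_fiberwise
      (f := fun q : (ZMod p × ZMod p) × (ZMod p × ZMod p) => q.1.2 - q.1.1)
      (t := Finset.univ) (fun q _ => Finset.mem_univ _)]
    refine Finset.sum_congr rfl fun t _ => ?_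
    congr 1
    rw [Finset.filter_filter]
    refine Finset.filter_congr fun q _ => ?_
    constructor
    · rintro ⟨h, h'⟩; exact ⟨h.trans h'.symm, h⟩
    · rintro ⟨h, h'⟩; exact ⟨h', h.symm.trans h'⟩
  rw [h2]
  refine Finset.card_bij' (fun q _ => ((q.1.2, q.2.1), (q.1.1, q.2.2)))
    (fun q _ => ((q.2.1, q.1.1), (q.1.2, q.2.2))) ?_ ?_ ?_ ?_
  · rintro ⟨⟨a, b⟩, ⟨c, d⟩⟩ hq
    simp only [Finset.mem_filter, Finset.mem_product] at hq ⊢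
    obtain ⟨⟨⟨ha, hb⟩, hc, hd⟩, h⟩ := hq
    exact ⟨⟨⟨hb, hc⟩, ha, hd⟩, by linear_combination h⟩
  · rintro ⟨⟨a, b⟩, ⟨c, d⟩⟩ hq
    simp only [Finset.mem_filter, Finset.mem_product] at hq ⊢
    obtain ⟨⟨⟨ha, hb⟩, hc, hd⟩, h⟩ := hq
    exact ⟨⟨⟨hc, ha⟩, hb, hd⟩, by linear_combination h⟩
  · rintro ⟨⟨a, b⟩, ⟨c, d⟩⟩ _; rfl
  · rintro ⟨⟨a, b⟩, ⟨c, d⟩⟩ _; rfl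

end comb

open Finset in
theorem stmt11 (p : ℕ) (hp : p.Prime) (θ : ZMod p) (hθ : θ ≠ 0)
    (B₁ B₂ : Finset (ZMod p))
    (ep : ZMod p → ℂ)
    (hep : ∀ x : ZMod p, ep x = Complex.exp (2 * Real.pi * Complex.I * (x.val : ℂ) / p))
    (E₁ E₂ : ℕ)
    (hE₁ : E₁ = (((B₁ ×ˢ B₁) ×ˢ (B₁ ×ˢ B₁)).filter
      (fun q => q.1.1 + q.1.2 = q.2.1 + q.2.2)).card)
    (hE₂ : E₂ = (((B₂ ×ˢ B₂) ×ˢ (B₂ ×ˢ B₂)).filter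
      (fun q => q.1.1 + q.1.2 = q.2.1 + q.2.2)).card) :
    ‖∑ b₁ ∈ B₁, ∑ b₂ ∈ B₂, ep (θ * (b₁ - b₂) ^ 2)‖ ≤
      (B₁.card : ℝ) ^ ((1 : ℝ) / 2) * (E₁ : ℝ) ^ ((1 : ℝ) / 8) *
        (B₂.card : ℝ) ^ ((1 : ℝ) / 2) * (E₂ : ℝ) ^ ((1 : ℝ) / 8) *
        (p : ℝ) ^ ((1 : ℝ) / 8) := by
  by_cases hp2 : p = 2
  · subst hp2
    have hb2 : ∀ x : ZMod 2, x = 0 ∨ x = 1 := by decide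
    have hθ1 : θ = 1 := by revert hθ; revert θ; decide
    subst hθ1
    have huniv : (Finset.univ : Finset (ZMod 2)) = {0, 1} := by decide
    have ep0 : ep 0 = 1 := by rw [hep]; simp
    have ep1 : ep 1 = -1 := by
      rw [hep]
      rw [show (2 * (Real.pi : ℂ) * Complex.I * (((1 : ZMod 2).val : ℕ) : ℂ) / ((2 : ℕ) : ℂ))
          = Real.pi * Complex.I by
        rw [show ((1 : ZMod 2).val) = 1 from rfl]
        push_cast
        ring]
      exact Complex.exp_pi_mul_I
    have hRHS0 : (0 : ℝ) ≤ (B₁.card : ℝ) ^ ((1 : ℝ) / 2) * (E₁ : ℝ) ^ ((1 : ℝ) / 8) *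
        (B₂.card : ℝ) ^ ((1 : ℝ) / 2) * (E₂ : ℝ) ^ ((1 : ℝ) / 8) *
        ((2 : ℕ) : ℝ) ^ ((1 : ℝ) / 8) := by positivity
    rcases eq_or_ne B₁.card 2 with h1 | h1
    · have hB1 : B₁ = Finset.univ := Finset.eq_univ_of_card _ (by rw [h1]; rfl)
      have hS0 : ∑ b₁ ∈ B₁, ∑ b₂ ∈ B₂, ep (1 * (b₁ - b₂) ^ 2) = 0 := by
        rw [Finset.sum_comm, hB1]
        refine Finset.sum_eq_zero fun b₂ _ => ?_
        rcases hb2 b₂ with rfl | rfl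
        · rw [huniv, Finset.sum_insert (by decide), Finset.sum_singleton,
            show (1 * ((0 : ZMod 2) - 0) ^ 2) = 0 by decide,
            show (1 * ((1 : ZMod 2) - 0) ^ 2) = 1 by decide, ep0, ep1]
          ring
        · rw [huniv, Finset.sum_insert (by decide), Finset.sum_singleton,
            show (1 * ((0 : ZMod 2) - 1) ^ 2) = 1 by decide,
            show (1 * ((1 : ZMod 2) - 1) ^ 2) = 0 by decide, ep0, ep1]
          ring
      rw [hS0, norm_zero]
      exact hRHS0
    · rcases eq_or_ne B₂.card 2 with h2 | h2
      · have hB2 : B₂ = Finset.univ := Finset.eq_univ_of_card _ (by rw [h2]; rfl)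
        have hS0 : ∑ b₁ ∈ B₁, ∑ b₂ ∈ B₂, ep (1 * (b₁ - b₂) ^ 2) = 0 := by
          rw [hB2]
          refine Finset.sum_eq_zero fun b₁ _ => ?_
          rcases hb2 b₁ with rfl | rfl
          · rw [huniv, Finset.sum_insert (by decide), Finset.sum_singleton,
              show (1 * ((0 : ZMod 2) - 0) ^ 2) = 0 by decide,
              show (1 * ((0 : ZMod 2) - 1) ^ 2) = 1 by decide, ep0, ep1]
            ring
          · rw [huniv, Finset.sum_insert (by decide), Finset.sum_singleton,
              show (1 * ((1 : ZMod 2) - 0) ^ 2) = 1 by decide,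
              show (1 * ((1 : ZMod 2) - 1) ^ 2) = 0 by decide, ep0, ep1]
            ring
        rw [hS0, norm_zero]
        exact hRHS0
      · -- both cards ≤ 1
        have hcard2 : Fintype.card (ZMod 2) = 2 := rfl
        have hc1 : B₁.card ≤ 1 := by
          have := Finset.card_le_univ B₁
          rw [hcard2] at this
          omega
        have hc2 : B₂.card ≤ 1 := by
          have := Finset.card_le_univ B₂
          rw [hcard2] at this
          omega
        rcases Nat.eq_zero_or_pos B₁.card with h0 | hpos1
        · rw [Finset.card_eq_zero.mp h0]
          simp only [Finset.sum_empty, norm_zero]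
          positivity
        rcases Nat.eq_zero_or_pos B₂.card with h0 | hpos2
        · rw [Finset.card_eq_zero.mp h0]
          simp only [Finset.sum_empty, Finset.sum_const_zero, norm_zero]
          positivity
        obtain ⟨a, ha⟩ := Finset.card_eq_one.mp (le_antisymm hc1 hpos1)
        obtain ⟨c, hc⟩ := Finset.card_eq_one.mp (le_antisymm hc2 hpos2)
        subst ha hc
        rw [Finset.sum_singleton, Finset.sum_singleton]
        have hnorm1 : ‖ep (1 * (a - c) ^ 2)‖ = 1 := norm_ep hp ep hep _
        rw [hnorm1]
        have hE1' : E₁ = 1 := by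
          rw [hE₁]
          rw [Finset.singleton_product_singleton, Finset.singleton_product_singleton,
            Finset.filter_singleton, if_pos rfl, Finset.card_singleton]
        have hE2' : E₂ = 1 := by
          rw [hE₂]
          rw [Finset.singleton_product_singleton, Finset.singleton_product_singleton,
            Finset.filter_singleton, if_pos rfl, Finset.card_singleton]
        rw [hE1', hE2', Finset.card_singleton, Finset.card_singleton]
        simp only [Nat.cast_one, Real.one_rpow, one_mul, mul_one]
        calc (1 : ℝ) = ((2 : ℕ) : ℝ) ^ ((0 : ℝ)) := by
              rw [Real.rpow_zero]
          _ ≤ ((2 : ℕ) : ℝ) ^ ((1 : ℝ) / 8) := by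
              apply Real.rpow_le_rpow_of_exponent_le (by norm_num) (by norm_num)
  · -- main case : p odd
    haveI : NeZero p := ⟨hp.pos.ne'⟩
    haveI := Fact.mk hp
    have h2θ : (2 : ZMod p) * θ ≠ 0 := by
      refine mul_ne_zero ?_ hθ
      intro h
      have h2 : ((2 : ℕ) : ZMod p) = 0 := by exact_mod_cast h
      have := (ZMod.natCast_eq_zero_iff 2 p).mp h2
      exact hp2 ((Nat.prime_dvd_prime_iff_eq hp Nat.prime_two).mp this)
    set F : ZMod p → ℝ := fun u => ‖∑ b ∈ B₁, ep (u * b)‖ with hF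
    set r : ZMod p → ℕ := fun t => ((B₂ ×ˢ B₂).filter (fun q => q.2 - q.1 = t)).card with hr
    have hFnn : ∀ u, 0 ≤ F u := fun u => norm_nonneg _
    -- Step A1 : first Cauchy-Schwarz
    have hA1 : ‖∑ b₁ ∈ B₁, ∑ b₂ ∈ B₂, ep (θ * (b₁ - b₂) ^ 2)‖ ^ 2
        ≤ (B₁.card : ℝ) * ∑ b₁ ∈ B₁, ‖∑ b₂ ∈ B₂, ep (θ * (b₁ - b₂) ^ 2)‖ ^ 2 := by
      calc ‖∑ b₁ ∈ B₁, ∑ b₂ ∈ B₂, ep (θ * (b₁ - b₂) ^ 2)‖ ^ 2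
          ≤ (∑ b₁ ∈ B₁, ‖∑ b₂ ∈ B₂, ep (θ * (b₁ - b₂) ^ 2)‖) ^ 2 :=
            pow_le_pow_left₀ (norm_nonneg _) (norm_sum_le _ _) 2
        _ = (∑ b₁ ∈ B₁, 1 * ‖∑ b₂ ∈ B₂, ep (θ * (b₁ - b₂) ^ 2)‖) ^ 2 := by simp
        _ ≤ (∑ _b₁ ∈ B₁, (1:ℝ) ^ 2) * ∑ b₁ ∈ B₁, ‖∑ b₂ ∈ B₂, ep (θ * (b₁ - b₂) ^ 2)‖ ^ 2 :=
            Finset.sum_mul_sq_le_sq_mul_sq _ _ _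
        _ = (B₁.card : ℝ) * ∑ b₁ ∈ B₁, ‖∑ b₂ ∈ B₂, ep (θ * (b₁ - b₂) ^ 2)‖ ^ 2 := by simp
    -- Step A2 : opening the square
    have key : ((∑ b₁ ∈ B₁, ‖∑ b₂ ∈ B₂, ep (θ * (b₁ - b₂) ^ 2)‖ ^ 2 : ℝ) : ℂ)
        = ∑ b₂ ∈ B₂, ∑ b₂' ∈ B₂,
            (ep (θ * (b₂ ^ 2 - b₂' ^ 2)) * ∑ b₁ ∈ B₁, ep ((2 * θ * (b₂' - b₂)) * b₁)) := by
      push_cast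
      calc (∑ b₁ ∈ B₁, (‖∑ b₂ ∈ B₂, ep (θ * (b₁ - b₂) ^ 2)‖ : ℂ) ^ 2)
          = ∑ b₁ ∈ B₁, ((∑ b₂ ∈ B₂, ep (θ * (b₁ - b₂) ^ 2)) *
              (starRingEnd ℂ) (∑ b₂ ∈ B₂, ep (θ * (b₁ - b₂) ^ 2))) :=
            Finset.sum_congr rfl fun b₁ _ => (Complex.mul_conj' _).symm
        _ = ∑ b₁ ∈ B₁, ∑ b₂ ∈ B₂, ∑ b₂' ∈ B₂,
              ep (θ * (b₁ - b₂) ^ 2) * ep (-(θ * (b₁ - b₂') ^ 2)) := by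
            refine Finset.sum_congr rfl fun b₁ _ => ?_
            rw [map_sum]
            rw [Finset.sum_congr rfl fun b₂' (_ : b₂' ∈ B₂) => conj_ep hp ep hep (θ * (b₁ - b₂') ^ 2)]
            exact Finset.sum_mul_sum _ _ _ _
        _ = ∑ b₂ ∈ B₂, ∑ b₂' ∈ B₂, ∑ b₁ ∈ B₁,
              ep (θ * (b₁ - b₂) ^ 2) * ep (-(θ * (b₁ - b₂') ^ 2)) := by
            rw [Finset.sum_comm]
            exact Finset.sum_congr rfl fun b₂ _ => Finset.sum_comm
        _ = ∑ b₂ ∈ B₂, ∑ b₂' ∈ B₂,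
              (ep (θ * (b₂ ^ 2 - b₂' ^ 2)) * ∑ b₁ ∈ B₁, ep ((2 * θ * (b₂' - b₂)) * b₁)) := by
            refine Finset.sum_congr rfl fun b₂ _ => Finset.sum_congr rfl fun b₂' _ => ?_
            rw [Finset.mul_sum]
            refine Finset.sum_congr rfl fun b₁ _ => ?_
            rw [← ep_add hp ep hep, ← ep_add hp ep hep]
            congr 1
            ring
    have hA2 : (∑ b₁ ∈ B₁, ‖∑ b₂ ∈ B₂, ep (θ * (b₁ - b₂) ^ 2)‖ ^ 2 : ℝ)
        ≤ ∑ b₂ ∈ B₂, ∑ b₂' ∈ B₂, F (2 * θ * (b₂' - b₂)) := by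
      have hnn : (0:ℝ) ≤ ∑ b₁ ∈ B₁, ‖∑ b₂ ∈ B₂, ep (θ * (b₁ - b₂) ^ 2)‖ ^ 2 :=
        Finset.sum_nonneg fun _ _ => sq_nonneg _
      calc (∑ b₁ ∈ B₁, ‖∑ b₂ ∈ B₂, ep (θ * (b₁ - b₂) ^ 2)‖ ^ 2 : ℝ)
          = ‖((∑ b₁ ∈ B₁, ‖∑ b₂ ∈ B₂, ep (θ * (b₁ - b₂) ^ 2)‖ ^ 2 : ℝ) : ℂ)‖ := by
            rw [Complex.norm_real, Real.norm_of_nonneg hnn]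
        _ = ‖∑ b₂ ∈ B₂, ∑ b₂' ∈ B₂,
              (ep (θ * (b₂ ^ 2 - b₂' ^ 2)) * ∑ b₁ ∈ B₁, ep ((2 * θ * (b₂' - b₂)) * b₁))‖ := by
            rw [key]
        _ ≤ ∑ b₂ ∈ B₂, ‖∑ b₂' ∈ B₂,
              (ep (θ * (b₂ ^ 2 - b₂' ^ 2)) * ∑ b₁ ∈ B₁, ep ((2 * θ * (b₂' - b₂)) * b₁))‖ :=
            norm_sum_le _ _
        _ ≤ ∑ b₂ ∈ B₂, ∑ b₂' ∈ B₂,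
              ‖ep (θ * (b₂ ^ 2 - b₂' ^ 2)) * ∑ b₁ ∈ B₁, ep ((2 * θ * (b₂' - b₂)) * b₁)‖ :=
            Finset.sum_le_sum fun b₂ _ => norm_sum_le _ _
        _ = ∑ b₂ ∈ B₂, ∑ b₂' ∈ B₂, F (2 * θ * (b₂' - b₂)) := by
            refine Finset.sum_congr rfl fun b₂ _ => Finset.sum_congr rfl fun b₂' _ => ?_
            rw [norm_mul, norm_ep hp ep hep, one_mul]
    -- Step B : fiberwise reindexing
    have hB : ∑ b₂ ∈ B₂, ∑ b₂' ∈ B₂, F (2 * θ * (b₂' - b₂))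
        = ∑ t : ZMod p, (r t : ℝ) * F (2 * θ * t) := by
      have h1 : ∑ b₂ ∈ B₂, ∑ b₂' ∈ B₂, F (2 * θ * (b₂' - b₂))
          = ∑ q ∈ B₂ ×ˢ B₂, F (2 * θ * (q.2 - q.1)) :=
        (Finset.sum_product B₂ B₂ (fun q => F (2 * θ * (q.2 - q.1)))).symm
      rw [h1, ← Finset.sum_fiberwise (B₂ ×ˢ B₂) (fun q => q.2 - q.1)
        (fun q => F (2 * θ * (q.2 - q.1)))]
      refine Finset.sum_congr rfl fun t _ => ?_
      rw [Finset.sum_congr rfl (fun q hq => by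
        rw [(Finset.mem_filter.mp hq).2] :
        ∀ q ∈ (B₂ ×ˢ B₂).filter (fun q => q.2 - q.1 = t),
          F (2 * θ * (q.2 - q.1)) = F (2 * θ * t)), Finset.sum_const, nsmul_eq_mul]
    -- Step C : second Cauchy-Schwarz
    have hsum_r : ∑ t : ZMod p, (r t : ℝ) = (B₂.card : ℝ) ^ 2 := by
      rw [← Nat.cast_sum]
      rw [show ∑ t : ZMod p, r t = B₂.card ^ 2 from sum_r_card B₂]
      push_cast
      ring
    have hCS2 : (∑ t : ZMod p, (r t : ℝ) * F (2 * θ * t)) ^ 2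
        ≤ (B₂.card : ℝ) ^ 2 * ∑ t : ZMod p, (r t : ℝ) * F (2 * θ * t) ^ 2 := by
      have := Finset.sum_mul_sq_le_sq_mul_sq Finset.univ
        (fun t : ZMod p => Real.sqrt (r t)) (fun t => Real.sqrt (r t) * F (2 * θ * t))
      have e1 : ∀ t : ZMod p, Real.sqrt (r t) * (Real.sqrt (r t) * F (2 * θ * t))
          = (r t : ℝ) * F (2 * θ * t) := fun t => by
        rw [← mul_assoc, Real.mul_self_sqrt (Nat.cast_nonneg _)]
      have e2 : ∀ t : ZMod p, Real.sqrt (r t) ^ 2 = (r t : ℝ) := fun t =>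
        Real.sq_sqrt (Nat.cast_nonneg _)
      have e3 : ∀ t : ZMod p, (Real.sqrt (r t) * F (2 * θ * t)) ^ 2
          = (r t : ℝ) * F (2 * θ * t) ^ 2 := fun t => by
        rw [mul_pow, e2]
      simp_rw [e1, e2, e3] at this
      rwa [hsum_r] at this
    -- Step D : third Cauchy-Schwarz + Parseval
    have hsum_rsq : ∑ t : ZMod p, (r t : ℝ) ^ 2 = (E₂ : ℝ) := by
      have h := sum_rsq (p := p) B₂
      rw [hE₂]
      exact_mod_cast h
    have hPar : ∑ t : ZMod p, F (2 * θ * t) ^ 4 = (p : ℝ) * (E₁ : ℝ) := by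
      have hbij : ∑ t : ZMod p, F (2 * θ * t) ^ 4 = ∑ u : ZMod p, F u ^ 4 :=
        Fintype.sum_bijective _ (mulLeft_bijective₀ (2 * θ) h2θ)
          (fun t => F (2 * θ * t) ^ 4) (fun u => F u ^ 4) (fun t => rfl)
      rw [hbij, hE₁]
      simp only [hF]
      exact parseval hp ep hep B₁
    have hCS3 : (∑ t : ZMod p, (r t : ℝ) * F (2 * θ * t) ^ 2) ^ 2
        ≤ (E₂ : ℝ) * ((p : ℝ) * (E₁ : ℝ)) := by
      have h := Finset.sum_mul_sq_le_sq_mul_sq Finset.univ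
        (fun t : ZMod p => (r t : ℝ)) (fun t => F (2 * θ * t) ^ 2)
      have e : ∀ t : ZMod p, (F (2 * θ * t) ^ 2) ^ 2 = F (2 * θ * t) ^ 4 := fun t => by ring
      simp_rw [e] at h
      rwa [hsum_rsq, hPar] at h
    -- assembling
    set S := ∑ b₁ ∈ B₁, ∑ b₂ ∈ B₂, ep (θ * (b₁ - b₂) ^ 2) with hS
    set X := ∑ t : ZMod p, (r t : ℝ) * F (2 * θ * t) with hX
    set Y := ∑ t : ZMod p, (r t : ℝ) * F (2 * θ * t) ^ 2 with hY
    have hXnn : 0 ≤ X := Finset.sum_nonneg fun t _ => mul_nonneg (Nat.cast_nonneg _) (hFnn _)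
    have h1 : ‖S‖ ^ 2 ≤ (B₁.card : ℝ) * X := by
      refine hA1.trans ?_
      exact mul_le_mul_of_nonneg_left (hA2.trans (le_of_eq hB)) (Nat.cast_nonneg _)
    have h8 : ‖S‖ ^ 8 ≤ (B₁.card : ℝ) ^ 4 * (B₂.card : ℝ) ^ 4 * ((E₂ : ℝ) * ((p : ℝ) * E₁)) := by
      calc ‖S‖ ^ 8 = (‖S‖ ^ 2) ^ 4 := by ring
        _ ≤ ((B₁.card : ℝ) * X) ^ 4 := pow_le_pow_left₀ (sq_nonneg _) h1 4
        _ = (B₁.card : ℝ) ^ 4 * (X ^ 2) ^ 2 := by ring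
        _ ≤ (B₁.card : ℝ) ^ 4 * (((B₂.card : ℝ) ^ 2 * Y) ^ 2) :=
            mul_le_mul_of_nonneg_left (pow_le_pow_left₀ (sq_nonneg X) hCS2 2) (by positivity)
        _ = (B₁.card : ℝ) ^ 4 * (B₂.card : ℝ) ^ 4 * Y ^ 2 := by ring
        _ ≤ (B₁.card : ℝ) ^ 4 * (B₂.card : ℝ) ^ 4 * ((E₂ : ℝ) * ((p : ℝ) * E₁)) :=
            mul_le_mul_of_nonneg_left hCS3 (by positivity)
    have hfin : ‖S‖ ≤ ((B₁.card : ℝ) ^ 4 * (B₂.card : ℝ) ^ 4 * ((E₂ : ℝ) * ((p : ℝ) * E₁)))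
        ^ ((1 : ℝ) / 8) := by
      have hS8 : ‖S‖ = (‖S‖ ^ (8 : ℕ)) ^ ((1 : ℝ) / 8) := by
        rw [← Real.rpow_natCast ‖S‖ 8, ← Real.rpow_mul (norm_nonneg _)]
        norm_num
      rw [hS8]
      exact Real.rpow_le_rpow (by positivity) h8 (by norm_num)
    exact hfin.trans (le_of_eq (rpow_combine _ _ _ _ _ (Nat.cast_nonneg _) (Nat.cast_nonneg _)
      (Nat.cast_nonneg _) (Nat.cast_nonneg _) (Nat.cast_nonneg _)))
end

section
/- Let m be a positive even integer, p a prime with p > (2m)^{8m²}, α = 1/(8m²), L = ⌊p^α⌋, U = L^{4m−1}, and let A = {x² + Ux (mod p) : 1 ≤ x ≤ L}. Then A satisfies the dissociativity property: for any a ∈ A and a₁, ..., a_{2m} ∈ A \ {a}, if ∑_{j=1}^{m} 1/(a − a_j) = ∑_{j=m+1}^{2m} 1/(a − a_j) in 𝔽_p, then (a₁,...,a_m) is a permutation of (a_{m+1},...,a_{2m}). -/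
open Finset

lemma count_filter_succ {α : Type*} [DecidableEq α] {m : ℕ} (f : Fin (m+1) → α) (t : α) :
    #(univ.filter (fun j => f j = t)) =
      #(univ.filter (fun j : Fin m => f j.succ = t)) + (if f 0 = t then 1 else 0) := by
  rw [Finset.card_filter, Finset.card_filter, Fin.sum_univ_succ]
  ring

lemma exists_perm_of_count {α : Type*} [DecidableEq α] : ∀ {m : ℕ} (f g : Fin m → α),
    (∀ t, #(univ.filter (fun j => f j = t)) = #(univ.filter (fun j => g j = t))) →
    ∃ σ : Equiv.Perm (Fin m), ∀ j, f j = g (σ j) := by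
  intro m
  induction m with
  | zero => exact fun f g _ => ⟨Equiv.refl _, fun j => j.elim0⟩
  | succ m ih =>
    intro f g h
    have h0 : 0 < #(univ.filter (fun j => g j = f 0)) := by
      rw [← h (f 0)]
      exact Finset.card_pos.2 ⟨0, by simp⟩
    obtain ⟨k, hk⟩ := Finset.card_pos.1 h0
    rw [Finset.mem_filter] at hk
    have hgk : g k = f 0 := hk.2
    set w : Equiv.Perm (Fin (m+1)) := Equiv.swap k 0 with hw
    have hgw : ∀ t, #(univ.filter (fun j => g (w j) = t)) = #(univ.filter (fun j => g j = t)) := by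
      intro t
      apply Finset.card_bij (fun j _ => w j)
      · intro a ha; simp only [Finset.mem_filter] at *; exact ⟨Finset.mem_univ _, ha.2⟩
      · intro a _ b _ hab; exact w.injective hab
      · intro b hb
        refine ⟨w.symm b, ?_, by simp⟩
        simp only [Finset.mem_filter, Finset.mem_univ, true_and] at *
        simpa using hb
    have hcount : ∀ t, #(univ.filter (fun j : Fin m => f j.succ = t)) =
        #(univ.filter (fun j : Fin m => g (w j.succ) = t)) := by
      intro t
      have h1 := count_filter_succ f t
      have h2 := count_filter_succ (fun j => g (w j)) t
      have h3 : g (w 0) = f 0 := by simp [hw, hgk]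
      rw [hgw t, ← h t] at h2
      rw [h3] at h2
      omega
    obtain ⟨τ, hτ⟩ := ih (fun j => f j.succ) (fun j => g (w j.succ)) hcount
    set e : Equiv.Perm (Fin (m+1)) := Equiv.Perm.decomposeFin.symm (0, τ) with he
    refine ⟨e.trans w, fun j => ?_⟩
    induction j using Fin.cases with
    | zero => simp [he, hw, hgk, Equiv.Perm.decomposeFin_symm_apply_zero]
    | succ i =>
      have : e i.succ = (τ i).succ := by
        rw [he, Equiv.Perm.decomposeFin_symm_apply_succ]; simp
      simp only [Equiv.trans_apply, this]
      exact hτ i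

lemma Lbounds (m p L : ℕ) (hm2 : 2 ≤ m) [hP : Fact p.Prime]
    (hp : (2 * m) ^ (8 * m ^ 2) < p)
    (hL : L = ⌊(p : ℝ) ^ ((1 : ℝ) / (8 * m ^ 2))⌋₊) :
    2 * m ≤ L ∧ L ^ (8 * m ^ 2) < p := by
  have hm0 : (0:ℝ) < 8 * (m:ℝ) ^ 2 := by positivity
  set α : ℝ := (1 : ℝ) / (8 * m ^ 2) with hα
  have hα0 : 0 < α := by positivity
  have hcast : ((8 * m ^ 2 : ℕ) : ℝ) = 8 * (m:ℝ) ^ 2 := by push_cast; ring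
  have hαn : α * ((8 * m ^ 2 : ℕ) : ℝ) = 1 := by
    rw [hcast, hα]; field_simp
  have h1 : (2 * m : ℕ) ≤ L := by
    rw [hL]
    apply Nat.le_floor
    have h2 : ((2 * m : ℕ) : ℝ) = (((2 * m) ^ (8 * m ^ 2) : ℕ) : ℝ) ^ α := by
      push_cast
      rw [← Real.rpow_natCast (2 * (m:ℝ)) (8 * m ^ 2), ← Real.rpow_mul (by positivity)]
      norm_num
      rw [show (8 * (m:ℝ) ^ 2) * α = 1 by rw [hα]; field_simp, Real.rpow_one]
    rw [h2]
    exact Real.rpow_le_rpow (by positivity) (by exact_mod_cast hp.le) hα0.le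
  have hLle : (L : ℝ) ≤ (p:ℝ) ^ α := by
    rw [hL]; exact Nat.floor_le (Real.rpow_nonneg (by positivity) _)
  have h3 : L ^ (8 * m ^ 2) ≤ p := by
    have : ((L ^ (8 * m ^ 2) : ℕ) : ℝ) ≤ ((p:ℕ) : ℝ) := by
      push_cast
      calc (L:ℝ) ^ (8 * m ^ 2) ≤ ((p:ℝ) ^ α) ^ (8 * m ^ 2) :=
            pow_le_pow_left₀ (by positivity) hLle _
        _ = (p:ℝ) := by
            rw [← Real.rpow_natCast ((p:ℝ) ^ α) (8 * m ^ 2), ← Real.rpow_mul (by positivity),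
              hαn, Real.rpow_one]
    exact_mod_cast this
  refine ⟨h1, lt_of_le_of_ne h3 ?_⟩
  intro heq
  have hL2 : 2 ≤ L := le_trans (by omega) h1
  rcases hP.out.eq_one_or_self_of_dvd L (heq ▸ dvd_pow_self L (by positivity)) with h | h
  · omega
  · have : L < L ^ (8 * m ^ 2) := by
      calc L = L ^ 1 := (pow_one L).symm
        _ < L ^ (8 * m ^ 2) := Nat.pow_lt_pow_right hL2 (by nlinarith)
    omega

lemma exp_id (m : ℕ) (hm : 1 ≤ m) :
    (4 * m + 1) * (2 * m - 1) + (2 * m + 1) = 8 * m ^ 2 := by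
  obtain ⟨n, rfl⟩ : ∃ n, m = n + 1 := ⟨m - 1, by omega⟩
  have h21 : 2 * (n + 1) - 1 = 2 * n + 1 := by omega
  rw [h21]; ring

lemma prodModEq {ι : Type*} (s : Finset ι) (f g : ι → ℤ) (n : ℤ)
    (h : ∀ i ∈ s, f i ≡ g i [ZMOD n]) : (∏ i ∈ s, f i) ≡ (∏ i ∈ s, g i) [ZMOD n] := by
  classical
  induction s using Finset.cons_induction with
  | empty => simp [Int.ModEq.refl]
  | cons a s ha ih =>
    rw [Finset.prod_cons, Finset.prod_cons]
    exact (h a (Finset.mem_cons_self a s)).mul (ih fun i hi => h i (Finset.mem_cons_of_mem hi))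

set_option maxHeartbeats 2000000 in
open Finset in
theorem stmt18 (m : ℕ) (hm : 0 < m) (hmeven : Even m)
    (p : ℕ) [Fact p.Prime] (hp : (2 * m) ^ (8 * m ^ 2) < p)
    (L U : ℕ)
    (hL : L = ⌊(p : ℝ) ^ ((1 : ℝ) / (8 * m ^ 2))⌋₊)
    (hU : U = L ^ (4 * m - 1))
    (A : Finset (ZMod p))
    (hA : A = (Finset.Icc 1 L).image (fun x : ℕ => (x : ZMod p) ^ 2 + (U : ZMod p) * (x : ZMod p))) :
    ∀ a ∈ A, ∀ a' a'' : Fin m → ZMod p,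
      (∀ j, a' j ∈ A ∧ a' j ≠ a) → (∀ j, a'' j ∈ A ∧ a'' j ≠ a) →
      (∑ j, (a - a' j)⁻¹) = (∑ j, (a - a'' j)⁻¹) →
      ∃ σ : Equiv.Perm (Fin m), ∀ j, a' j = a'' (σ j) := by
  classical
  have hP : p.Prime := Fact.out
  have hm2 : 2 ≤ m := by obtain ⟨k, hk⟩ := hmeven; omega
  obtain ⟨h2mL, hLp⟩ := Lbounds m p L hm2 hp hL
  have hL2 : 2 ≤ L := by omega
  have hmL : m < L := by omega
  have hUle : 2 * L + U ≤ L ^ (4 * m) := by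
    have h1 : L ^ (4 * m) = L ^ (4 * m - 1) * L := by
      rw [← pow_succ]; congr 1; omega
    have h2 : L ^ 3 ≤ L ^ (4 * m - 1) := Nat.pow_le_pow_right (by omega) (by omega)
    have h3 : 2 * L ≤ L ^ 3 := by
      calc 2 * L ≤ L * L := Nat.mul_le_mul_right L hL2
        _ = L * L * 1 := by ring
        _ ≤ L * L * L := Nat.mul_le_mul_left _ (by omega)
        _ = L ^ 3 := by ring
    have h4 : L ^ (4 * m - 1) * 2 ≤ L ^ (4 * m - 1) * L := Nat.mul_le_mul_left _ hL2
    rw [hU]; omega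
  have h4mp : L ^ (4 * m) < p := by
    have : L ^ (4 * m) ≤ L ^ (8 * m ^ 2) := Nat.pow_le_pow_right (by omega) (by nlinarith)
    omega
  have hLltp : L < p :=
    lt_of_le_of_lt (by calc L = L ^ 1 := (pow_one L).symm
      _ ≤ L ^ (4 * m) := Nat.pow_le_pow_right (by omega) (by omega)) h4mp
  have hUp : 2 * L + U < p := lt_of_le_of_lt hUle h4mp
  set fz : ℕ → ZMod p := fun t => (t : ZMod p) ^ 2 + (U : ZMod p) * (t : ZMod p) with hfz
  set F : ℕ → ℕ → ℤ := fun x t => ((x : ℤ) - t) * ((x : ℤ) + t + U) with hF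
  have hdiff : ∀ x y : ℕ, fz x - fz y = ((F x y : ℤ) : ZMod p) := by
    intro x y; rw [hfz, hF]; push_cast; ring
  have hFne : ∀ x ∈ Icc 1 L, ∀ t ∈ Icc 1 L, t ≠ x → ((F x t : ℤ) : ZMod p) ≠ 0 := by
    intro x hx t ht hne
    rw [Finset.mem_Icc] at hx ht
    rw [Ne, ZMod.intCast_zmod_eq_zero_iff_dvd]
    intro hdvd
    rcases (Nat.prime_iff_prime_int.1 hP).2.2 _ _ hdvd with h | h
    · have : ((x : ℤ) - t) = 0 := Int.eq_zero_of_abs_lt_dvd h (by rw [abs_lt]; constructor <;> [omega; omega])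
      omega
    · have h1 : (p : ℤ) ≤ (x : ℤ) + t + U := Int.le_of_dvd (by omega) h
      omega
  have hinj : ∀ x ∈ Icc 1 L, ∀ y ∈ Icc 1 L, fz x = fz y → x = y := by
    intro x hx y hy hxy
    by_contra hne
    exact hFne x hx y hy (Ne.symm hne) (by rw [← hdiff, hxy, sub_self])
  intro a ha a' a'' h' h'' hsum
  rw [hA, Finset.mem_image] at ha
  obtain ⟨x, hx, hax'⟩ := ha
  have hax : fz x = a := hax'
  have h'm : ∀ j, ∃ y, y ∈ Icc 1 L ∧ fz y = a' j := by
    intro j; have := (h' j).1; rw [hA, Finset.mem_image] at this; exact this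
  have h''m : ∀ j, ∃ y, y ∈ Icc 1 L ∧ fz y = a'' j := by
    intro j; have := (h'' j).1; rw [hA, Finset.mem_image] at this; exact this
  choose y' hy' using h'm
  choose y'' hy'' using h''m
  have hy'ne : ∀ j, y' j ≠ x := fun j h => (h' j).2 (by rw [← (hy' j).2, h, hax])
  have hy''ne : ∀ j, y'' j ≠ x := fun j h => (h'' j).2 (by rw [← (hy'' j).2, h, hax])
  set c' : ℕ → ℕ := fun t => #(univ.filter (fun j => y' j = t)) with hc'
  set c'' : ℕ → ℕ := fun t => #(univ.filter (fun j => y'' j = t)) with hc''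
  set lam : ℕ → ℤ := fun t => (c' t : ℤ) - (c'' t : ℤ) with hlam
  set S : Finset ℕ := (univ.image y') ∪ (univ.image y'') with hS
  set T : Finset ℕ := S.filter (fun t => lam t ≠ 0) with hT
  have hc'm : ∀ t, c' t ≤ m := fun t => le_trans (Finset.card_filter_le _ _) (by simp)
  have hc''m : ∀ t, c'' t ≤ m := fun t => le_trans (Finset.card_filter_le _ _) (by simp)
  have hc'0 : ∀ t ∉ univ.image y', c' t = 0 := by
    intro t ht
    simp only [hc']
    rw [Finset.card_eq_zero, Finset.filter_eq_empty_iff]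
    intro j _ hj
    exact ht (Finset.mem_image.2 ⟨j, Finset.mem_univ j, hj⟩)
  have hc''0 : ∀ t ∉ univ.image y'', c'' t = 0 := by
    intro t ht
    simp only [hc'']
    rw [Finset.card_eq_zero, Finset.filter_eq_empty_iff]
    intro j _ hj
    exact ht (Finset.mem_image.2 ⟨j, Finset.mem_univ j, hj⟩)
  set g : ℕ → ZMod p := fun t => ((F x t : ℤ) : ZMod p)⁻¹ with hg
  have hdiffa' : ∀ j, a - a' j = ((F x (y' j) : ℤ) : ZMod p) := by
    intro j; rw [← hax, ← (hy' j).2, hdiff]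
  have hdiffa'' : ∀ j, a - a'' j = ((F x (y'' j) : ℤ) : ZMod p) := by
    intro j; rw [← hax, ← (hy'' j).2, hdiff]
  have e1 : ∑ j, (a - a' j)⁻¹ = ∑ t ∈ S, (c' t : ZMod p) * g t := by
    have h0 : ∑ j, (a - a' j)⁻¹ = ∑ j, g (y' j) := by
      apply Finset.sum_congr rfl; intro j _; rw [hdiffa' j]
    rw [h0, Finset.sum_comp g y',
      Finset.sum_subset Finset.subset_union_left]
    · apply Finset.sum_congr rfl; intro t _; rw [nsmul_eq_mul]
    · intro t _ ht
      have h1 : c' t = 0 := hc'0 t ht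
      simp only [hc'] at h1
      rw [h1, zero_smul]
  have e2 : ∑ j, (a - a'' j)⁻¹ = ∑ t ∈ S, (c'' t : ZMod p) * g t := by
    have h0 : ∑ j, (a - a'' j)⁻¹ = ∑ j, g (y'' j) := by
      apply Finset.sum_congr rfl; intro j _; rw [hdiffa'' j]
    rw [h0, Finset.sum_comp g y'',
      Finset.sum_subset Finset.subset_union_right]
    · apply Finset.sum_congr rfl; intro t _; rw [nsmul_eq_mul]
    · intro t _ ht
      have h1 : c'' t = 0 := hc''0 t ht
      simp only [hc''] at h1
      rw [h1, zero_smul]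
  have hsum' : ∑ t ∈ T, ((lam t : ℤ) : ZMod p) * g t = 0 := by
    rw [hT, Finset.sum_filter_of_ne (by intro t _ h hc; rw [hc, Int.cast_zero, zero_mul] at h; exact h rfl)]
    have h0 : ∑ t ∈ S, ((lam t : ℤ) : ZMod p) * g t
        = (∑ t ∈ S, (c' t : ZMod p) * g t) - ∑ t ∈ S, (c'' t : ZMod p) * g t := by
      rw [← Finset.sum_sub_distrib]
      apply Finset.sum_congr rfl
      intro t _
      rw [hlam]
      push_cast
      ring
    rw [h0, ← e1, ← e2, hsum, sub_self]
  by_cases hTe : T = ∅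
  · -- equal multisets: construct permutation
    have hlam0 : ∀ t, c' t = c'' t := by
      intro t
      by_cases htS : t ∈ S
      · have hnT : t ∉ T := by rw [hTe]; exact Finset.notMem_empty t
        rw [hT, Finset.mem_filter] at hnT
        push_neg at hnT
        have := hnT htS
        simp only [hlam] at this
        omega
      · have h1 : c' t = 0 := hc'0 t (fun h => htS (Finset.mem_union_left _ h))
        have h2 : c'' t = 0 := hc''0 t (fun h => htS (Finset.mem_union_right _ h))
        omega
    apply exists_perm_of_count a' a''
    intro c
    by_cases hc1 : ∃ j, a' j = c
    · obtain ⟨j, hj⟩ := hc1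
      have hfilter1 : univ.filter (fun i => a' i = c) = univ.filter (fun i => y' i = y' j) := by
        apply Finset.filter_congr
        intro i _
        constructor
        · intro h
          exact hinj _ (hy' i).1 _ (hy' j).1 (by rw [(hy' i).2, (hy' j).2, h, hj])
        · intro h
          rw [← (hy' i).2, h, (hy' j).2, hj]
      have hfilter2 : univ.filter (fun i => a'' i = c) = univ.filter (fun i => y'' i = y' j) := by
        apply Finset.filter_congr
        intro i _
        constructor
        · intro h
          exact hinj _ (hy'' i).1 _ (hy' j).1 (by rw [(hy'' i).2, (hy' j).2, h, hj])
        · intro h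
          rw [← (hy'' i).2, h, (hy' j).2, hj]
      rw [hfilter1, hfilter2]
      exact hlam0 (y' j)
    · push_neg at hc1
      by_cases hc2 : ∃ j, a'' j = c
      · obtain ⟨j, hj⟩ := hc2
        have hfilter2 : univ.filter (fun i => a'' i = c) = univ.filter (fun i => y'' i = y'' j) := by
          apply Finset.filter_congr
          intro i _
          constructor
          · intro h
            exact hinj _ (hy'' i).1 _ (hy'' j).1 (by rw [(hy'' i).2, (hy'' j).2, h, hj])
          · intro h
            rw [← (hy'' i).2, h, (hy'' j).2, hj]
        have hz : c' (y'' j) = 0 := by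
          simp only [hc']
          rw [Finset.card_eq_zero, Finset.filter_eq_empty_iff]
          intro i _ hi
          exact hc1 i (by rw [← (hy' i).2, hi, (hy'' j).2, hj])
        rw [Finset.filter_false_of_mem (fun i _ => hc1 i), hfilter2, Finset.card_empty]
        have hzz := hlam0 (y'' j)
        rw [hz] at hzz
        simp only [hc''] at hzz
        omega
      · push_neg at hc2
        rw [Finset.filter_false_of_mem (fun i _ => hc1 i),
          Finset.filter_false_of_mem (fun i _ => hc2 i)]
  · -- T nonempty: contradiction
    exfalso
    obtain ⟨t₀, ht₀⟩ := Finset.nonempty_of_ne_empty hTe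
    have hTsub : ∀ t ∈ T, t ∈ Icc 1 L ∧ t ≠ x := by
      intro t ht
      rw [hT, Finset.mem_filter] at ht
      rcases Finset.mem_union.1 ht.1 with h | h
      · obtain ⟨j, _, rfl⟩ := Finset.mem_image.1 h
        exact ⟨(hy' j).1, hy'ne j⟩
      · obtain ⟨j, _, rfl⟩ := Finset.mem_image.1 h
        exact ⟨(hy'' j).1, hy''ne j⟩
    have hTcard : T.card ≤ 2 * m := by
      calc T.card ≤ S.card := Finset.card_filter_le _ _
        _ ≤ (univ.image y').card + (univ.image y'').card := Finset.card_union_le _ _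
        _ ≤ m + m := add_le_add (le_trans (Finset.card_image_le) (by simp))
            (le_trans (Finset.card_image_le) (by simp))
        _ = 2 * m := by ring
    have hlam_abs : ∀ t, |lam t| ≤ (m : ℤ) := by
      intro t
      have h1 := hc'm t
      have h2 := hc''m t
      simp only [hlam]
      rw [abs_le]
      omega
    have hxmem := Finset.mem_Icc.1 hx
    set N : ℤ := ∑ t ∈ T, lam t * ∏ s ∈ T.erase t, F x s with hN
    have hcastN : ((N : ℤ) : ZMod p) = 0 := by
      have expand : ((N : ℤ) : ZMod p)
          = ∑ t ∈ T, ((lam t : ℤ) : ZMod p) * ∏ s ∈ T.erase t, ((F x s : ℤ) : ZMod p) := by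
        rw [hN]; push_cast; rfl
      have hprod : ∀ t ∈ T, (∏ s ∈ T.erase t, ((F x s : ℤ) : ZMod p))
            = (∏ s ∈ T, ((F x s : ℤ) : ZMod p)) * g t := by
        intro t ht
        have hne := hFne x hx t (hTsub t ht).1 (hTsub t ht).2
        rw [hg, ← Finset.mul_prod_erase T (fun s => ((F x s : ℤ) : ZMod p)) ht,
          mul_comm (((F x t : ℤ) : ZMod p)) _, mul_assoc, mul_inv_cancel₀ hne, mul_one]
      rw [expand]
      calc ∑ t ∈ T, ((lam t : ℤ) : ZMod p) * ∏ s ∈ T.erase t, ((F x s : ℤ) : ZMod p)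
          = ∑ t ∈ T, (∏ s ∈ T, ((F x s : ℤ) : ZMod p)) * (((lam t : ℤ) : ZMod p) * g t) := by
            apply Finset.sum_congr rfl; intro t ht; rw [hprod t ht]; ring
        _ = (∏ s ∈ T, ((F x s : ℤ) : ZMod p)) * ∑ t ∈ T, ((lam t : ℤ) : ZMod p) * g t := by
            rw [Finset.mul_sum]
        _ = 0 := by rw [hsum', mul_zero]
    have hpN : (p : ℤ) ∣ N := (ZMod.intCast_zmod_eq_zero_iff_dvd N p).1 hcastN
    have habsF : ∀ s ∈ Icc 1 L, |F x s| ≤ (L : ℤ) ^ (4 * m + 1) := by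
      intro s hs
      rw [Finset.mem_Icc] at hs
      have hb : (2 * (L:ℤ) + U) ≤ (L:ℤ) ^ (4 * m) := by exact_mod_cast hUle
      calc |F x s| = |((x:ℤ) - s)| * |((x:ℤ) + s + U)| := by rw [hF]; exact abs_mul _ _
        _ ≤ (L:ℤ) * (2 * L + U) := by
            apply mul_le_mul ?_ ?_ (abs_nonneg _) (by positivity)
            · rw [abs_le]; omega
            · rw [abs_le]; omega
        _ ≤ (L:ℤ) * (L:ℤ) ^ (4 * m) := by
            apply mul_le_mul_of_nonneg_left hb (by positivity)
        _ = (L:ℤ) ^ (4 * m + 1) := by ring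
    have hexp1 : ∀ t ∈ T, (T.erase t).card ≤ 2 * m - 1 := by
      intro t ht
      rw [Finset.card_erase_of_mem ht]
      omega
    have hNne : N ≠ 0 := by
      intro hN0
      set M : ℤ := (x : ℤ) + t₀ + U with hM
      have ht₀L := Finset.mem_Icc.1 (hTsub t₀ ht₀).1
      have hMpos : 0 < M := by rw [hM]; omega
      have hMU : (U : ℤ) < M := by rw [hM]; omega
      have hMF : M ∣ F x t₀ := ⟨(x:ℤ) - t₀, by rw [hF, hM]; ring⟩
      set R : ℤ := lam t₀ * ∏ s ∈ T.erase t₀, F x s with hR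
      set R' : ℤ := lam t₀ * ∏ s ∈ T.erase t₀, (((x:ℤ) - s) * ((s:ℤ) - t₀)) with hR'
      have h1 : M ∣ N - R := by
        have hsplit : N - R = ∑ t ∈ T.erase t₀, lam t * ∏ s ∈ T.erase t, F x s := by
          rw [hN, hR, ← Finset.add_sum_erase T _ ht₀]; ring
        rw [hsplit]
        apply Finset.dvd_sum
        intro t ht
        have htne : t₀ ∈ T.erase t :=
          Finset.mem_erase.2 ⟨Ne.symm (Finset.mem_erase.1 ht).1, ht₀⟩
        exact Dvd.dvd.mul_left (dvd_trans hMF (Finset.dvd_prod_of_mem _ htne)) _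
      have h2 : M ∣ R - R' := by
        rw [hR, hR', ← mul_sub]
        apply Dvd.dvd.mul_left
        have hcong := prodModEq (T.erase t₀) (fun s => F x s)
          (fun s => ((x:ℤ) - s) * ((s:ℤ) - t₀)) M ?_
        · exact (Int.ModEq.dvd hcong.symm)
        · intro s _
          rw [Int.modEq_iff_dvd]
          exact ⟨-((x:ℤ) - s), by rw [hF, hM]; ring⟩
      have hdR' : M ∣ R' := by
        have h3 : M ∣ N - R' := by
          have : N - R' = (N - R) + (R - R') := by ring
          rw [this]; exact dvd_add h1 h2
        rw [hN0, zero_sub] at h3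
        exact (dvd_neg).1 h3
      have hlamt₀ : lam t₀ ≠ 0 := (Finset.mem_filter.1 ht₀).2
      have hR'ne : R' ≠ 0 := by
        rw [hR']
        apply mul_ne_zero hlamt₀
        rw [Finset.prod_ne_zero_iff]
        intro s hs
        have hsT := Finset.mem_erase.1 hs
        have hsL := Finset.mem_Icc.1 (hTsub s hsT.2).1
        have hsx := (hTsub s hsT.2).2
        apply mul_ne_zero
        · intro h0
          have : (x:ℤ) = s := by omega
          exact hsx (by exact_mod_cast this.symm)
        · intro h0
          have : (s:ℤ) = t₀ := by omega
          exact hsT.1 (by exact_mod_cast this)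
      have hprodbound : |∏ s ∈ T.erase t₀, (((x:ℤ) - s) * ((s:ℤ) - t₀))|
          ≤ ((L:ℤ) ^ 2) ^ (2 * m - 1) := by
        rw [Finset.abs_prod]
        calc ∏ s ∈ T.erase t₀, |((x:ℤ) - s) * ((s:ℤ) - t₀)|
            ≤ ∏ _s ∈ T.erase t₀, (L:ℤ) ^ 2 := by
              apply Finset.prod_le_prod (fun i _ => abs_nonneg _)
              intro s hs
              have hsL := Finset.mem_Icc.1 (hTsub s (Finset.mem_erase.1 hs).2).1
              rw [abs_mul]
              calc |(x:ℤ) - s| * |(s:ℤ) - t₀| ≤ (L:ℤ) * (L:ℤ) := by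
                    apply mul_le_mul ?_ ?_ (abs_nonneg _) (by positivity)
                    · rw [abs_le]; omega
                    · rw [abs_le]; omega
                _ = (L:ℤ) ^ 2 := by ring
          _ = ((L:ℤ) ^ 2) ^ (T.erase t₀).card := Finset.prod_const _
          _ ≤ ((L:ℤ) ^ 2) ^ (2 * m - 1) := by
              apply pow_le_pow_right₀ (by nlinarith [hL2])
              exact hexp1 t₀ ht₀
      have hR'lt : |R'| < M := by
        have hcalc : |R'| ≤ (m:ℤ) * ((L:ℤ) ^ 2) ^ (2 * m - 1) := by
          rw [hR', abs_mul]
          exact mul_le_mul (hlam_abs t₀) hprodbound (abs_nonneg _) (by positivity)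
        have hL4 : (L:ℤ) * ((L:ℤ) ^ 2) ^ (2 * m - 1) = (L:ℤ) ^ (4 * m - 1) := by
          rw [← pow_mul, ← pow_succ']
          congr 1
          omega
        have hmLz : (m:ℤ) < L := by exact_mod_cast hmL
        have hUz : (U:ℤ) = (L:ℤ) ^ (4 * m - 1) := by rw [hU]; push_cast; ring
        calc |R'| ≤ (m:ℤ) * ((L:ℤ) ^ 2) ^ (2 * m - 1) := hcalc
          _ < (L:ℤ) * ((L:ℤ) ^ 2) ^ (2 * m - 1) := by
              apply mul_lt_mul_of_pos_right hmLz (by positivity)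
          _ = (U:ℤ) := by rw [hL4, hUz]
          _ < M := hMU
      have := Int.le_of_dvd (abs_pos.2 hR'ne) ((dvd_abs _ _).2 hdR')
      omega
    -- size bound on N
    have hNlt : |N| < (p:ℤ) := by
      have hterm : ∀ t ∈ T, |lam t * ∏ s ∈ T.erase t, F x s|
          ≤ (m:ℤ) * ((L:ℤ) ^ (4 * m + 1)) ^ (2 * m - 1) := by
        intro t ht
        rw [abs_mul]
        apply mul_le_mul (hlam_abs t) ?_ (abs_nonneg _) (by positivity)
        rw [Finset.abs_prod]
        calc ∏ s ∈ T.erase t, |F x s| ≤ ∏ _s ∈ T.erase t, (L:ℤ) ^ (4 * m + 1) := by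
              apply Finset.prod_le_prod (fun i _ => abs_nonneg _)
              intro s hs
              exact habsF s (hTsub s (Finset.mem_erase.1 hs).2).1
          _ = ((L:ℤ) ^ (4 * m + 1)) ^ (T.erase t).card := Finset.prod_const _
          _ ≤ ((L:ℤ) ^ (4 * m + 1)) ^ (2 * m - 1) := by
              apply pow_le_pow_right₀ (one_le_pow₀ (by exact_mod_cast hL2.trans' (by omega)))
              exact hexp1 t ht
      have hNb : |N| ≤ (T.card : ℤ) * ((m:ℤ) * ((L:ℤ) ^ (4 * m + 1)) ^ (2 * m - 1)) := by
        calc |N| ≤ ∑ t ∈ T, |lam t * ∏ s ∈ T.erase t, F x s| := Finset.abs_sum_le_sum_abs _ _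
          _ ≤ ∑ _t ∈ T, (m:ℤ) * ((L:ℤ) ^ (4 * m + 1)) ^ (2 * m - 1) :=
              Finset.sum_le_sum hterm
          _ = (T.card : ℤ) * ((m:ℤ) * ((L:ℤ) ^ (4 * m + 1)) ^ (2 * m - 1)) := by
              rw [Finset.sum_const, nsmul_eq_mul]
      have hexp : (4 * m + 1) * (2 * m - 1) + (2 * m + 1) = 8 * m ^ 2 :=
        exp_id m (by omega)
      have hsmall : 2 * m * m < L ^ (2 * m + 1) := by
        have h1 : L ^ 3 ≤ L ^ (2 * m + 1) := Nat.pow_le_pow_right (by omega) (by omega)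
        have h2 : 2 * m * m < L ^ 3 := by
          calc 2 * m * m < 2 * m * (2 * m) :=
                mul_lt_mul_of_pos_left (by omega) (by omega)
            _ ≤ L * L := Nat.mul_le_mul h2mL h2mL
            _ = L * L * 1 := by ring
            _ ≤ L * L * L := Nat.mul_le_mul_left _ (by omega)
            _ = L ^ 3 := by ring
        omega
      have hfinal : (2 * m * m) * L ^ ((4 * m + 1) * (2 * m - 1)) < p := by
        calc (2 * m * m) * L ^ ((4 * m + 1) * (2 * m - 1))
            < L ^ (2 * m + 1) * L ^ ((4 * m + 1) * (2 * m - 1)) := by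
              exact mul_lt_mul_of_pos_right hsmall (by positivity)
          _ = L ^ (8 * m ^ 2) := by rw [← pow_add, ← hexp]; ring_nf
          _ < p := hLp
      have hfinalz : ((2 * m * m : ℕ) : ℤ) * ((L:ℤ) ^ ((4 * m + 1) * (2 * m - 1))) < (p:ℤ) := by
        exact_mod_cast hfinal
      have hTz : (T.card : ℤ) * (m:ℤ) ≤ ((2 * m * m : ℕ) : ℤ) := by
        push_cast
        have : T.card ≤ 2 * m := hTcard
        nlinarith [hTcard, hm2]
      calc |N| ≤ (T.card : ℤ) * ((m:ℤ) * ((L:ℤ) ^ (4 * m + 1)) ^ (2 * m - 1)) := hNb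
        _ = ((T.card : ℤ) * (m:ℤ)) * ((L:ℤ) ^ ((4 * m + 1) * (2 * m - 1))) := by
            rw [← pow_mul]; ring
        _ ≤ ((2 * m * m : ℕ) : ℤ) * ((L:ℤ) ^ ((4 * m + 1) * (2 * m - 1))) := by
            apply mul_le_mul_of_nonneg_right hTz (by positivity)
        _ < (p:ℤ) := hfinalz
    have := Int.le_of_dvd (abs_pos.2 hNne) ((dvd_abs _ _).2 hpN)
    omega
end
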